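/- arXiv:2505.19008 — 6 statements merged into one kernel-verified Lean document; each statement's English description precedes it below -/
import Mathlib

section
/- The only formal power series f(x) over ℚ with f(0)=0, f'(0)=1 satisfying f(x) + f(-x)·f'(x) = 0 are f(x) = x and f(x) = (1 - e^{-νx})/ν for some nonzero ν ∈ ℚ. Equivalently, the relation f(x) + f(-x)f'(x) = 0 determines all coefficients of f inductively from f''(0). -/
/-!
STATEMENT 1: The only formal power series `f` over ℚ with `f(0)=0`, `f'(0)=1`
satisfying `f(x) + f(-x)·f'(x) = 0` are `f(x) = x` and `f(x) = (1 - e^{-νx})/ν`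
for some nonzero `ν ∈ ℚ`.  Note `(1 - e^{-νx})/ν = ∑_{n≥1} (-1)^{n+1} ν^{n-1} xⁿ/n!`.
-/

private lemma coeff_derivFun' (f : PowerSeries ℚ) (n : ℕ) :
    PowerSeries.coeff n (PowerSeries.derivativeFun f) = PowerSeries.coeff (n + 1) f * (n + 1) :=
  PowerSeries.coeff_derivative f n

open PowerSeries Finset in
private lemma coeff_rel' (p : PowerSeries ℚ) (n : ℕ)
    (hp : p + PowerSeries.rescale (-1) p * PowerSeries.derivativeFun p = 0) :
    coeff n p + ∑ x ∈ antidiagonal n,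
      ((-1:ℚ))^x.1 * coeff x.1 p * (coeff (x.2+1) p * ((x.2:ℚ)+1)) = 0 := by
  have h := congrArg (coeff n) hp
  rw [map_add, coeff_mul, map_zero] at h
  rw [← h]
  congr 1
  refine Finset.sum_congr rfl fun x _ => ?_
  rw [coeff_rescale, coeff_derivFun']

open PowerSeries Finset in
private lemma uniq (p q : PowerSeries ℚ)
    (hp0 : PowerSeries.constantCoeff p = 0) (hq0 : PowerSeries.constantCoeff q = 0)
    (hp1 : PowerSeries.coeff 1 p = 1) (hq1 : PowerSeries.coeff 1 q = 1)
    (h2 : PowerSeries.coeff 2 p = PowerSeries.coeff 2 q)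
    (hp : p + PowerSeries.rescale (-1) p * PowerSeries.derivativeFun p = 0)
    (hq : q + PowerSeries.rescale (-1) q * PowerSeries.derivativeFun q = 0) :
    p = q := by
  ext n
  induction n using Nat.strong_induction_on with
  | _ n ih =>
  match n, ih with
  | 0, _ => simp [PowerSeries.coeff_zero_eq_constantCoeff, hp0, hq0]
  | 1, _ => rw [hp1, hq1]
  | 2, _ => exact h2
  | (m+3), ih =>
    set n := m + 3 with hn
    have Hp := coeff_rel' p n hp
    have Hq := coeff_rel' q n hq
    set F : ℕ × ℕ → ℚ := fun x =>
      ((-1:ℚ))^x.1 * coeff x.1 p * (coeff (x.2+1) p * ((x.2:ℚ)+1)) -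
      ((-1:ℚ))^x.1 * coeff x.1 q * (coeff (x.2+1) q * ((x.2:ℚ)+1)) with hF
    have hpair : ((1, m+2) : ℕ × ℕ) ≠ (n, 0) := by
      simp only [ne_eq, Prod.mk.injEq, not_and]
      intro h; omega
    have hsum : ∑ x ∈ antidiagonal n, F x = F (1, m+2) + F (n, 0) := by
      rw [← Finset.sum_pair hpair]
      symm
      apply Finset.sum_subset
      · intro x hx
        simp only [Finset.mem_insert, Finset.mem_singleton] at hx
        rcases hx with h | h <;> subst h <;>
          · rw [Finset.HasAntidiagonal.mem_antidiagonal]; omega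
      · intro x hx hxne
        simp only [Finset.mem_insert, Finset.mem_singleton] at hxne
        push_neg at hxne
        rw [Finset.HasAntidiagonal.mem_antidiagonal] at hx
        rcases Nat.eq_zero_or_pos x.1 with h1 | h1
        · simp only [hF, h1, pow_zero, one_mul, PowerSeries.coeff_zero_eq_constantCoeff_apply,
            hp0, hq0, zero_mul, sub_zero]
        · have hx1 : x.1 ≠ 1 := by
            intro h; apply hxne.1; have h2' : x.2 = m + 2 := by omega
            exact Prod.ext h h2'
          have hxn : x.1 ≠ n := by
            intro h; apply hxne.2; have h2' : x.2 = 0 := by omega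
            exact Prod.ext h h2'
          have hlt1 : x.1 < n := by omega
          have hlt2 : x.2 + 1 < n := by omega
          simp only [hF]
          rw [ih x.1 hlt1, ih (x.2+1) hlt2]
          ring
    have key : (1 - (n:ℚ) + (-1)^n) * (coeff n p - coeff n q) = 0 := by
      have hFed : F (1, m+2) + F (n, 0) =
          (-(n:ℚ)) * (coeff n p - coeff n q) + (-1:ℚ)^n * (coeff n p - coeff n q) := by
        simp only [hF]
        rw [hp1, hq1]
        have hm2 : (m+2)+1 = n := by omega
        rw [hm2]
        push_cast [hn]
        ring
      have hdiff : (coeff n p - coeff n q) + ∑ x ∈ antidiagonal n, F x = 0 := by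
        have hsplit : ∑ x ∈ antidiagonal n, F x =
            (∑ x ∈ antidiagonal n, ((-1:ℚ))^x.1 * coeff x.1 p * (coeff (x.2+1) p * ((x.2:ℚ)+1)))
          - ∑ x ∈ antidiagonal n, ((-1:ℚ))^x.1 * coeff x.1 q * (coeff (x.2+1) q * ((x.2:ℚ)+1)) := by
          rw [← Finset.sum_sub_distrib]
        rw [hsplit]
        linarith [Hp, Hq]
      rw [hsum, hFed] at hdiff
      linear_combination hdiff
    have hne : (1 - (n:ℚ) + (-1)^n) ≠ 0 := by
      rcases Nat.even_or_odd n with he | ho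
      · rw [he.neg_one_pow]
        have h2' : n ≠ 2 := by omega
        have h2q : (n:ℚ) ≠ 2 := by exact_mod_cast h2'
        intro h; apply h2q; linarith
      · rw [ho.neg_one_pow]
        have h0' : (n:ℚ) ≠ 0 := by positivity
        intro h; apply h0'; linarith
    rcases mul_eq_zero.mp key with h | h
    · exact absurd h hne
    · linarith

open PowerSeries in
private lemma rescale_C' (a r : ℚ) : PowerSeries.rescale a (PowerSeries.C r) = PowerSeries.C r := by
  ext n
  rw [coeff_rescale]
  cases n with
  | zero => simp
  | succ k => simp [PowerSeries.coeff_C]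

open PowerSeries in
private lemma deriv_X : PowerSeries.derivativeFun (PowerSeries.X : PowerSeries ℚ) = 1 := by
  ext n
  rw [coeff_derivFun']
  cases n with
  | zero => simp
  | succ k => simp [PowerSeries.coeff_X, PowerSeries.coeff_one]

open PowerSeries in
private lemma X_rel : (PowerSeries.X : PowerSeries ℚ) +
    PowerSeries.rescale (-1) PowerSeries.X * PowerSeries.derivativeFun PowerSeries.X = 0 := by
  rw [deriv_X, rescale_neg_one_X]
  ring

theorem stmt1 (f : PowerSeries ℚ)
    (h0 : PowerSeries.constantCoeff f = 0)
    (h1 : PowerSeries.coeff 1 f = 1)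
    (hrel : f + PowerSeries.rescale (-1) f * PowerSeries.derivativeFun f = 0) :
    f = PowerSeries.X ∨
      ∃ ν : ℚ, ν ≠ 0 ∧
        f = PowerSeries.mk (fun n =>
          if n = 0 then 0 else (-1) ^ (n + 1) * ν ^ (n - 1) / (n.factorial : ℚ)) := by
  classical
  set ν : ℚ := -2 * PowerSeries.coeff 2 f with hν
  by_cases hν0 : ν = 0
  · left
    apply uniq f PowerSeries.X h0 (by simp [PowerSeries.constantCoeff_X]) h1
      (by simp [PowerSeries.coeff_X]) ?_ hrel X_rel
    have : PowerSeries.coeff 2 f = 0 := by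
      have : (-2 : ℚ) * PowerSeries.coeff 2 f = 0 := by rw [← hν]; exact hν0
      linarith
    simp [this, PowerSeries.coeff_X]
  · right
    refine ⟨ν, hν0, ?_⟩
    set E : PowerSeries ℚ := PowerSeries.rescale (-ν) (PowerSeries.exp ℚ) with hE
    set g : PowerSeries ℚ := PowerSeries.C ν⁻¹ * (1 - E) with hg
    have hcoeffE : ∀ n : ℕ, PowerSeries.coeff n E = (-ν)^n / n.factorial := by
      intro n
      rw [hE, PowerSeries.coeff_rescale, PowerSeries.coeff_exp]
      simp [div_eq_mul_inv]
    have hcoeffg : ∀ n : ℕ, PowerSeries.coeff n g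
        = ν⁻¹ * (PowerSeries.coeff n 1 - (-ν)^n / n.factorial) := by
      intro n
      rw [hg, PowerSeries.coeff_C_mul, map_sub, hcoeffE]
    -- derivative of E
    have hderivE : PowerSeries.derivativeFun E = PowerSeries.C (-ν) * E := by
      ext n
      rw [coeff_derivFun', PowerSeries.coeff_C_mul, hcoeffE, hcoeffE,
        pow_succ]
      rw [Nat.factorial_succ]
      push_cast
      have hfac : ((n.factorial : ℚ)) ≠ 0 := by exact_mod_cast n.factorial_ne_zero
      field_simp
    -- derivative of g
    have hderivg : PowerSeries.derivativeFun g = E := by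
      ext n
      rw [coeff_derivFun', hcoeffg, hcoeffE]
      rw [PowerSeries.coeff_one]
      simp only [Nat.succ_ne_zero, if_false]
      rw [pow_succ, Nat.factorial_succ]
      push_cast
      have hfac : ((n.factorial : ℚ)) ≠ 0 := by exact_mod_cast n.factorial_ne_zero
      field_simp
      ring
    -- rescale (-1) g
    have hrescaleg : PowerSeries.rescale (-1) g
        = PowerSeries.C ν⁻¹ * (1 - PowerSeries.rescale ν (PowerSeries.exp ℚ)) := by
      rw [hg, map_mul, map_sub, map_one, rescale_C', hE, PowerSeries.rescale_rescale]
      norm_num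
    have hEE : PowerSeries.rescale ν (PowerSeries.exp ℚ) * E = 1 := by
      rw [hE, PowerSeries.exp_mul_exp_eq_exp_add]
      rw [add_neg_cancel, PowerSeries.rescale_zero]
      simp
    have hgrel : g + PowerSeries.rescale (-1) g * PowerSeries.derivativeFun g = 0 := by
      rw [hderivg, hrescaleg, hg]
      linear_combination (-(PowerSeries.C ν⁻¹)) * hEE
    have hg0 : PowerSeries.constantCoeff g = 0 := by
      rw [← PowerSeries.coeff_zero_eq_constantCoeff_apply, hcoeffg]
      simp
    have hg1 : PowerSeries.coeff 1 g = 1 := by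
      rw [hcoeffg]
      rw [PowerSeries.coeff_one]
      field_simp
      simp
    have hg2 : PowerSeries.coeff 2 f = PowerSeries.coeff 2 g := by
      rw [hcoeffg, PowerSeries.coeff_one]
      have : PowerSeries.coeff 2 f = -ν / 2 := by rw [hν]; ring
      rw [this]
      norm_num [Nat.factorial]
      field_simp
    have hfg : f = g := uniq f g h0 hg0 h1 hg1 hg2 hrel hgrel
    rw [hfg]
    ext n
    rw [hcoeffg, PowerSeries.coeff_mk]
    cases n with
    | zero => simp
    | succ k =>
      simp only [Nat.succ_ne_zero, if_false, PowerSeries.coeff_one, Nat.add_sub_cancel]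
      rw [neg_pow]
      field_simp
      ring
end

section
/- Let f ∈ ℂ[[x]] satisfy f(0)=0, f'(0)=1, f''(0)=0, f'''(0)=0 and the blow-up (Fay trisecant-type) relation R = f(a+b)f(x-y)f(a+x)f(b+y) - f(b)f(x)f(a+x-y)f(a+b+y) + f(a)f(y)f(a+b+x)f(b-x+y) = 0 in ℂ[[x,y,a,b]]. Then f(x)·( f(x)f'(-x) + f(-x)f'(x) ) = 0, and consequently f is an odd power series: f(-x) = -f(x). -/
/-!
STATEMENT 2: If `f ∈ ℂ[[x]]` with `f(0)=0`, `f'(0)=1`, `f''(0)=0`, `f'''(0)=0`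
satisfies the blow-up (Fay trisecant-type) relation
`f(a+b)f(x-y)f(a+x)f(b+y) - f(b)f(x)f(a+x-y)f(a+b+y) + f(a)f(y)f(a+b+x)f(b-x+y) = 0`
in ℂ[[x,y,a,b]], then `f(x)·(f(x)f'(-x) + f(-x)f'(x)) = 0` and `f` is odd.
Variables are ordered `(x, y, a, b)`.
-/

/-- Composition `f(∑ cᵢ·xᵢ)` of a one-variable formal power series with a linear form,
as a formal power series in four variables. -/
noncomputable def linSub (c : Fin 4 → ℂ) (f : PowerSeries ℂ) : MvPowerSeries (Fin 4) ℂ :=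
  fun d => PowerSeries.coeff (∑ i, d i) f * (Nat.multinomial Finset.univ d : ℂ) *
    ∏ i, c i ^ d i

open Finset PowerSeries

lemma coeff_derivativeFun' (f : PowerSeries ℂ) (n : ℕ) :
    PowerSeries.coeff n (PowerSeries.derivativeFun f) = PowerSeries.coeff (n + 1) f * (n + 1) :=
  PowerSeries.coeff_derivative f n

noncomputable def dd (S : Finset (Fin 3)) (n : ℕ) : Fin 4 →₀ ℕ :=
  Finsupp.equivFunOnFinite.symm (Fin.cases n fun j => if j ∈ S then 1 else 0)

@[simp] lemma dd_zero (S : Finset (Fin 3)) (n : ℕ) : dd S n 0 = n := rfl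

@[simp] lemma dd_succ (S : Finset (Fin 3)) (n : ℕ) (j : Fin 3) :
    dd S n j.succ = if j ∈ S then 1 else 0 := by
  simp [dd]

noncomputable def phi (S : Finset (Fin 3)) (F : MvPowerSeries (Fin 4) ℂ) : PowerSeries ℂ :=
  PowerSeries.mk fun n => MvPowerSeries.coeff (dd S n) F

@[simp] lemma coeff_phi (S : Finset (Fin 3)) (F : MvPowerSeries (Fin 4) ℂ) (n : ℕ) :
    PowerSeries.coeff n (phi S F) = MvPowerSeries.coeff (dd S n) F := by
  simp [phi]

lemma dd_add_dd (S T : Finset (Fin 3)) (hT : T ⊆ S) (k l : ℕ) :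
    dd T k + dd (S \ T) l = dd S (k + l) := by
  ext i
  refine Fin.cases ?_ (fun j => ?_) i
  · simp [Finsupp.add_apply]
  · rw [Finsupp.add_apply, dd_succ, dd_succ, dd_succ]
    by_cases hj : j ∈ T
    · simp [hj, hT hj]
    · by_cases hjS : j ∈ S <;> simp [hj, hjS]

lemma eq_dd_of_add_eq (u v : Fin 4 →₀ ℕ) (S : Finset (Fin 3)) (n : ℕ) (h : u + v = dd S n) :
    u = dd (S.filter fun j => u j.succ = 1) (u 0) ∧
    v = dd (S \ S.filter fun j => u j.succ = 1) (v 0) ∧ u 0 + v 0 = n := by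
  have h' : ∀ i, u i + v i = dd S n i := fun i => by rw [← Finsupp.add_apply, h]
  refine ⟨?_, ?_, by simpa using h' 0⟩
  · ext i
    refine Fin.cases ?_ (fun j => ?_) i
    · simp
    · have hx := h' j.succ
      rw [dd_succ] at hx
      simp only [dd_succ, Finset.mem_filter]
      by_cases hjS : j ∈ S <;> simp only [hjS, if_true, if_false, true_and, false_and] at hx ⊢ <;>
        first
        | (split_ifs <;> omega)
        | omega
  · ext i
    refine Fin.cases ?_ (fun j => ?_) i
    · simp
    · have hx := h' j.succ
      rw [dd_succ] at hx
      simp only [dd_succ, Finset.mem_sdiff, Finset.mem_filter]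
      by_cases hjS : j ∈ S <;>
        simp only [hjS, if_true, if_false, true_and, false_and] at hx ⊢ <;>
        first
        | (split_ifs <;> omega)
        | omega

lemma phi_mul (S : Finset (Fin 3)) (F G : MvPowerSeries (Fin 4) ℂ) :
    phi S (F * G) = ∑ T ∈ S.powerset, phi T F * phi (S \ T) G := by
  classical
  ext n
  rw [coeff_phi, MvPowerSeries.coeff_mul, map_sum]
  simp_rw [PowerSeries.coeff_mul, coeff_phi]
  rw [← Finset.sum_product']
  refine Finset.sum_nbij' (fun p => ((S.filter fun j => p.1 j.succ = 1), (p.1 0, p.2 0)))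
    (fun q => (dd q.1 q.2.1, dd (S \ q.1) q.2.2)) ?_ ?_ ?_ ?_ ?_
  · intro p hp
    rw [Finset.HasAntidiagonal.mem_antidiagonal] at hp
    obtain ⟨h1, h2, h3⟩ := eq_dd_of_add_eq p.1 p.2 S n hp
    simp [Finset.mem_product, Finset.mem_powerset, Finset.filter_subset, h3]
  · intro q hq
    rw [Finset.mem_product, Finset.mem_powerset, Finset.HasAntidiagonal.mem_antidiagonal] at hq
    rw [Finset.HasAntidiagonal.mem_antidiagonal, dd_add_dd S q.1 hq.1, hq.2]
  · intro p hp
    rw [Finset.HasAntidiagonal.mem_antidiagonal] at hp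
    obtain ⟨h1, h2, h3⟩ := eq_dd_of_add_eq p.1 p.2 S n hp
    ext i
    · exact (congrFun (congrArg _ h1.symm) i : _)
    · exact (congrFun (congrArg _ h2.symm) i : _)
  · intro q hq
    rw [Finset.mem_product, Finset.mem_powerset, Finset.HasAntidiagonal.mem_antidiagonal] at hq
    have : S.filter (fun j => dd q.1 q.2.1 j.succ = 1) = q.1 := by
      ext j
      simp only [Finset.mem_filter, dd_succ]
      constructor
      · rintro ⟨hjS, hj⟩
        by_contra hc; simp [hc] at hj
      · intro hj; exact ⟨hq.1 hj, by simp [hj]⟩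
    exact Prod.ext this (Prod.ext (dd_zero _ _) (dd_zero _ _))
  · intro p hp
    rw [Finset.HasAntidiagonal.mem_antidiagonal] at hp
    obtain ⟨h1, h2, h3⟩ := eq_dd_of_add_eq p.1 p.2 S n hp
    rw [← h1, ← h2]
lemma coeff_iter_deriv (f : PowerSeries ℂ) (s n : ℕ) :
    PowerSeries.coeff n (PowerSeries.derivativeFun^[s] f) =
      ((n + s).descFactorial s : ℂ) * PowerSeries.coeff (n + s) f := by
  induction s generalizing n with
  | zero => simp
  | succ s ih =>
    rw [Function.iterate_succ_apply', coeff_derivativeFun', ih]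
    have h2 : n + (s + 1) = n + 1 + s := by omega
    have h1 : (n + 1 + s).descFactorial (s + 1) = (n + 1) * ((n + 1 + s).descFactorial s) := by
      rw [Nat.descFactorial_succ]
      congr 1
      omega
    rw [h2, h1]
    push_cast
    ring
  
lemma multinomial_dd (S : Finset (Fin 3)) (n : ℕ) :
    Nat.multinomial Finset.univ (dd S n) = (n + S.card).descFactorial S.card := by
  have key := Nat.multinomial_spec Finset.univ (dd S n)
  have hsum : ∑ i, dd S n i = n + S.card := by
    rw [Fin.sum_univ_succ]
    simp [Finset.sum_ite_mem]
  have hprod : ∏ i, Nat.factorial (dd S n i) = Nat.factorial n := by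
    rw [Fin.prod_univ_succ,
      Finset.prod_eq_one (fun j _ => by rw [dd_succ]; split_ifs <;> simp)]
    simp
  have hdesc : Nat.factorial n * (n + S.card).descFactorial S.card
      = Nat.factorial (n + S.card) := by
    have h := Nat.factorial_mul_descFactorial (Nat.le_add_left S.card n)
    simpa using h
  refine Nat.eq_of_mul_eq_mul_left (Nat.factorial_pos n) ?_
  rw [hdesc, ← hsum, ← key, hprod]

lemma phi_linSub (c : Fin 4 → ℂ) (f : PowerSeries ℂ) (S : Finset (Fin 3)) :
    phi S (linSub c f) = (∏ j ∈ S, c j.succ) •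
      PowerSeries.rescale (c 0) (PowerSeries.derivativeFun^[S.card] f) := by
  ext n
  rw [coeff_phi]
  have hL : MvPowerSeries.coeff (dd S n) (linSub c f)
      = PowerSeries.coeff (∑ i, dd S n i) f *
        (Nat.multinomial Finset.univ (dd S n) : ℂ) * ∏ i, c i ^ dd S n i := rfl
  have hsum : ∑ i, dd S n i = n + S.card := by
    rw [Fin.sum_univ_succ]
    simp [Finset.sum_ite_mem]
  have hprod : ∏ i, c i ^ dd S n i = c 0 ^ n * ∏ j ∈ S, c j.succ := by
    rw [Fin.prod_univ_succ, dd_zero,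
      Finset.prod_congr rfl (fun (j : Fin 3) _ => show c j.succ ^ dd S n j.succ
        = if j ∈ S then c j.succ else 1 by rw [dd_succ]; split_ifs <;> simp),
      Finset.prod_ite_mem, Finset.univ_inter]
  rw [hL, hsum, hprod, multinomial_dd]
  rw [map_smul, PowerSeries.coeff_rescale, coeff_iter_deriv]
  simp only [smul_eq_mul]
  ring
lemma pw_e : ((∅ : Finset (Fin 3))).powerset = {(∅ : Finset (Fin 3))} := by decide
lemma sd_e_e : (∅ : Finset (Fin 3)) \ (∅ : Finset (Fin 3)) = (∅ : Finset (Fin 3)) := by decide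
lemma sd_e_0 : (∅ : Finset (Fin 3)) \ ({0} : Finset (Fin 3)) = (∅ : Finset (Fin 3)) := by decide
lemma sd_e_1 : (∅ : Finset (Fin 3)) \ ({1} : Finset (Fin 3)) = (∅ : Finset (Fin 3)) := by decide
lemma sd_e_2 : (∅ : Finset (Fin 3)) \ ({2} : Finset (Fin 3)) = (∅ : Finset (Fin 3)) := by decide
lemma sd_e_01 : (∅ : Finset (Fin 3)) \ ({0,1} : Finset (Fin 3)) = (∅ : Finset (Fin 3)) := by decide
lemma sd_e_02 : (∅ : Finset (Fin 3)) \ ({0,2} : Finset (Fin 3)) = (∅ : Finset (Fin 3)) := by decide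
lemma sd_e_12 : (∅ : Finset (Fin 3)) \ ({1,2} : Finset (Fin 3)) = (∅ : Finset (Fin 3)) := by decide
lemma sd_e_012 : (∅ : Finset (Fin 3)) \ ({0,1,2} : Finset (Fin 3)) = (∅ : Finset (Fin 3)) := by decide
lemma cd_e : ((∅ : Finset (Fin 3))).card = 0 := by decide
lemma pw_0 : (({0} : Finset (Fin 3))).powerset = {(∅ : Finset (Fin 3)), ({0} : Finset (Fin 3))} := by decide
lemma sd_0_e : ({0} : Finset (Fin 3)) \ (∅ : Finset (Fin 3)) = ({0} : Finset (Fin 3)) := by decide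
lemma sd_0_0 : ({0} : Finset (Fin 3)) \ ({0} : Finset (Fin 3)) = (∅ : Finset (Fin 3)) := by decide
lemma sd_0_1 : ({0} : Finset (Fin 3)) \ ({1} : Finset (Fin 3)) = ({0} : Finset (Fin 3)) := by decide
lemma sd_0_2 : ({0} : Finset (Fin 3)) \ ({2} : Finset (Fin 3)) = ({0} : Finset (Fin 3)) := by decide
lemma sd_0_01 : ({0} : Finset (Fin 3)) \ ({0,1} : Finset (Fin 3)) = (∅ : Finset (Fin 3)) := by decide
lemma sd_0_02 : ({0} : Finset (Fin 3)) \ ({0,2} : Finset (Fin 3)) = (∅ : Finset (Fin 3)) := by decide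
lemma sd_0_12 : ({0} : Finset (Fin 3)) \ ({1,2} : Finset (Fin 3)) = ({0} : Finset (Fin 3)) := by decide
lemma sd_0_012 : ({0} : Finset (Fin 3)) \ ({0,1,2} : Finset (Fin 3)) = (∅ : Finset (Fin 3)) := by decide
lemma cd_0 : (({0} : Finset (Fin 3))).card = 1 := by decide
lemma pw_1 : (({1} : Finset (Fin 3))).powerset = {(∅ : Finset (Fin 3)), ({1} : Finset (Fin 3))} := by decide
lemma sd_1_e : ({1} : Finset (Fin 3)) \ (∅ : Finset (Fin 3)) = ({1} : Finset (Fin 3)) := by decide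
lemma sd_1_0 : ({1} : Finset (Fin 3)) \ ({0} : Finset (Fin 3)) = ({1} : Finset (Fin 3)) := by decide
lemma sd_1_1 : ({1} : Finset (Fin 3)) \ ({1} : Finset (Fin 3)) = (∅ : Finset (Fin 3)) := by decide
lemma sd_1_2 : ({1} : Finset (Fin 3)) \ ({2} : Finset (Fin 3)) = ({1} : Finset (Fin 3)) := by decide
lemma sd_1_01 : ({1} : Finset (Fin 3)) \ ({0,1} : Finset (Fin 3)) = (∅ : Finset (Fin 3)) := by decide
lemma sd_1_02 : ({1} : Finset (Fin 3)) \ ({0,2} : Finset (Fin 3)) = ({1} : Finset (Fin 3)) := by decide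
lemma sd_1_12 : ({1} : Finset (Fin 3)) \ ({1,2} : Finset (Fin 3)) = (∅ : Finset (Fin 3)) := by decide
lemma sd_1_012 : ({1} : Finset (Fin 3)) \ ({0,1,2} : Finset (Fin 3)) = (∅ : Finset (Fin 3)) := by decide
lemma cd_1 : (({1} : Finset (Fin 3))).card = 1 := by decide
lemma pw_2 : (({2} : Finset (Fin 3))).powerset = {(∅ : Finset (Fin 3)), ({2} : Finset (Fin 3))} := by decide
lemma sd_2_e : ({2} : Finset (Fin 3)) \ (∅ : Finset (Fin 3)) = ({2} : Finset (Fin 3)) := by decide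
lemma sd_2_0 : ({2} : Finset (Fin 3)) \ ({0} : Finset (Fin 3)) = ({2} : Finset (Fin 3)) := by decide
lemma sd_2_1 : ({2} : Finset (Fin 3)) \ ({1} : Finset (Fin 3)) = ({2} : Finset (Fin 3)) := by decide
lemma sd_2_2 : ({2} : Finset (Fin 3)) \ ({2} : Finset (Fin 3)) = (∅ : Finset (Fin 3)) := by decide
lemma sd_2_01 : ({2} : Finset (Fin 3)) \ ({0,1} : Finset (Fin 3)) = ({2} : Finset (Fin 3)) := by decide
lemma sd_2_02 : ({2} : Finset (Fin 3)) \ ({0,2} : Finset (Fin 3)) = (∅ : Finset (Fin 3)) := by decide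
lemma sd_2_12 : ({2} : Finset (Fin 3)) \ ({1,2} : Finset (Fin 3)) = (∅ : Finset (Fin 3)) := by decide
lemma sd_2_012 : ({2} : Finset (Fin 3)) \ ({0,1,2} : Finset (Fin 3)) = (∅ : Finset (Fin 3)) := by decide
lemma cd_2 : (({2} : Finset (Fin 3))).card = 1 := by decide
lemma pw_01 : (({0,1} : Finset (Fin 3))).powerset = {(∅ : Finset (Fin 3)), ({0} : Finset (Fin 3)), ({1} : Finset (Fin 3)), ({0,1} : Finset (Fin 3))} := by decide
lemma sd_01_e : ({0,1} : Finset (Fin 3)) \ (∅ : Finset (Fin 3)) = ({0,1} : Finset (Fin 3)) := by decide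
lemma sd_01_0 : ({0,1} : Finset (Fin 3)) \ ({0} : Finset (Fin 3)) = ({1} : Finset (Fin 3)) := by decide
lemma sd_01_1 : ({0,1} : Finset (Fin 3)) \ ({1} : Finset (Fin 3)) = ({0} : Finset (Fin 3)) := by decide
lemma sd_01_2 : ({0,1} : Finset (Fin 3)) \ ({2} : Finset (Fin 3)) = ({0,1} : Finset (Fin 3)) := by decide
lemma sd_01_01 : ({0,1} : Finset (Fin 3)) \ ({0,1} : Finset (Fin 3)) = (∅ : Finset (Fin 3)) := by decide
lemma sd_01_02 : ({0,1} : Finset (Fin 3)) \ ({0,2} : Finset (Fin 3)) = ({1} : Finset (Fin 3)) := by decide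
lemma sd_01_12 : ({0,1} : Finset (Fin 3)) \ ({1,2} : Finset (Fin 3)) = ({0} : Finset (Fin 3)) := by decide
lemma sd_01_012 : ({0,1} : Finset (Fin 3)) \ ({0,1,2} : Finset (Fin 3)) = (∅ : Finset (Fin 3)) := by decide
lemma cd_01 : (({0,1} : Finset (Fin 3))).card = 2 := by decide
lemma pw_02 : (({0,2} : Finset (Fin 3))).powerset = {(∅ : Finset (Fin 3)), ({0} : Finset (Fin 3)), ({2} : Finset (Fin 3)), ({0,2} : Finset (Fin 3))} := by decide
lemma sd_02_e : ({0,2} : Finset (Fin 3)) \ (∅ : Finset (Fin 3)) = ({0,2} : Finset (Fin 3)) := by decide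
lemma sd_02_0 : ({0,2} : Finset (Fin 3)) \ ({0} : Finset (Fin 3)) = ({2} : Finset (Fin 3)) := by decide
lemma sd_02_1 : ({0,2} : Finset (Fin 3)) \ ({1} : Finset (Fin 3)) = ({0,2} : Finset (Fin 3)) := by decide
lemma sd_02_2 : ({0,2} : Finset (Fin 3)) \ ({2} : Finset (Fin 3)) = ({0} : Finset (Fin 3)) := by decide
lemma sd_02_01 : ({0,2} : Finset (Fin 3)) \ ({0,1} : Finset (Fin 3)) = ({2} : Finset (Fin 3)) := by decide
lemma sd_02_02 : ({0,2} : Finset (Fin 3)) \ ({0,2} : Finset (Fin 3)) = (∅ : Finset (Fin 3)) := by decide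
lemma sd_02_12 : ({0,2} : Finset (Fin 3)) \ ({1,2} : Finset (Fin 3)) = ({0} : Finset (Fin 3)) := by decide
lemma sd_02_012 : ({0,2} : Finset (Fin 3)) \ ({0,1,2} : Finset (Fin 3)) = (∅ : Finset (Fin 3)) := by decide
lemma cd_02 : (({0,2} : Finset (Fin 3))).card = 2 := by decide
lemma pw_12 : (({1,2} : Finset (Fin 3))).powerset = {(∅ : Finset (Fin 3)), ({1} : Finset (Fin 3)), ({2} : Finset (Fin 3)), ({1,2} : Finset (Fin 3))} := by decide
lemma sd_12_e : ({1,2} : Finset (Fin 3)) \ (∅ : Finset (Fin 3)) = ({1,2} : Finset (Fin 3)) := by decide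
lemma sd_12_0 : ({1,2} : Finset (Fin 3)) \ ({0} : Finset (Fin 3)) = ({1,2} : Finset (Fin 3)) := by decide
lemma sd_12_1 : ({1,2} : Finset (Fin 3)) \ ({1} : Finset (Fin 3)) = ({2} : Finset (Fin 3)) := by decide
lemma sd_12_2 : ({1,2} : Finset (Fin 3)) \ ({2} : Finset (Fin 3)) = ({1} : Finset (Fin 3)) := by decide
lemma sd_12_01 : ({1,2} : Finset (Fin 3)) \ ({0,1} : Finset (Fin 3)) = ({2} : Finset (Fin 3)) := by decide
lemma sd_12_02 : ({1,2} : Finset (Fin 3)) \ ({0,2} : Finset (Fin 3)) = ({1} : Finset (Fin 3)) := by decide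
lemma sd_12_12 : ({1,2} : Finset (Fin 3)) \ ({1,2} : Finset (Fin 3)) = (∅ : Finset (Fin 3)) := by decide
lemma sd_12_012 : ({1,2} : Finset (Fin 3)) \ ({0,1,2} : Finset (Fin 3)) = (∅ : Finset (Fin 3)) := by decide
lemma cd_12 : (({1,2} : Finset (Fin 3))).card = 2 := by decide
lemma pw_012 : (({0,1,2} : Finset (Fin 3))).powerset = {(∅ : Finset (Fin 3)), ({0} : Finset (Fin 3)), ({1} : Finset (Fin 3)), ({2} : Finset (Fin 3)), ({0,1} : Finset (Fin 3)), ({0,2} : Finset (Fin 3)), ({1,2} : Finset (Fin 3)), ({0,1,2} : Finset (Fin 3))} := by decide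
lemma sd_012_e : ({0,1,2} : Finset (Fin 3)) \ (∅ : Finset (Fin 3)) = ({0,1,2} : Finset (Fin 3)) := by decide
lemma sd_012_0 : ({0,1,2} : Finset (Fin 3)) \ ({0} : Finset (Fin 3)) = ({1,2} : Finset (Fin 3)) := by decide
lemma sd_012_1 : ({0,1,2} : Finset (Fin 3)) \ ({1} : Finset (Fin 3)) = ({0,2} : Finset (Fin 3)) := by decide
lemma sd_012_2 : ({0,1,2} : Finset (Fin 3)) \ ({2} : Finset (Fin 3)) = ({0,1} : Finset (Fin 3)) := by decide
lemma sd_012_01 : ({0,1,2} : Finset (Fin 3)) \ ({0,1} : Finset (Fin 3)) = ({2} : Finset (Fin 3)) := by decide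
lemma sd_012_02 : ({0,1,2} : Finset (Fin 3)) \ ({0,2} : Finset (Fin 3)) = ({1} : Finset (Fin 3)) := by decide
lemma sd_012_12 : ({0,1,2} : Finset (Fin 3)) \ ({1,2} : Finset (Fin 3)) = ({0} : Finset (Fin 3)) := by decide
lemma sd_012_012 : ({0,1,2} : Finset (Fin 3)) \ ({0,1,2} : Finset (Fin 3)) = (∅ : Finset (Fin 3)) := by decide
lemma cd_012 : (({0,1,2} : Finset (Fin 3))).card = 3 := by decide
lemma pw_u : ((Finset.univ : Finset (Fin 3))).powerset = {(∅ : Finset (Fin 3)), ({0} : Finset (Fin 3)), ({1} : Finset (Fin 3)), ({2} : Finset (Fin 3)), ({0,1} : Finset (Fin 3)), ({0,2} : Finset (Fin 3)), ({1,2} : Finset (Fin 3)), ({0,1,2} : Finset (Fin 3))} := by decide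
lemma sd_u_e : (Finset.univ : Finset (Fin 3)) \ (∅ : Finset (Fin 3)) = ({0,1,2} : Finset (Fin 3)) := by decide
lemma sd_u_0 : (Finset.univ : Finset (Fin 3)) \ ({0} : Finset (Fin 3)) = ({1,2} : Finset (Fin 3)) := by decide
lemma sd_u_1 : (Finset.univ : Finset (Fin 3)) \ ({1} : Finset (Fin 3)) = ({0,2} : Finset (Fin 3)) := by decide
lemma sd_u_2 : (Finset.univ : Finset (Fin 3)) \ ({2} : Finset (Fin 3)) = ({0,1} : Finset (Fin 3)) := by decide
lemma sd_u_01 : (Finset.univ : Finset (Fin 3)) \ ({0,1} : Finset (Fin 3)) = ({2} : Finset (Fin 3)) := by decide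
lemma sd_u_02 : (Finset.univ : Finset (Fin 3)) \ ({0,2} : Finset (Fin 3)) = ({1} : Finset (Fin 3)) := by decide
lemma sd_u_12 : (Finset.univ : Finset (Fin 3)) \ ({1,2} : Finset (Fin 3)) = ({0} : Finset (Fin 3)) := by decide
lemma sd_u_012 : (Finset.univ : Finset (Fin 3)) \ ({0,1,2} : Finset (Fin 3)) = (∅ : Finset (Fin 3)) := by decide
lemma cd_u : ((Finset.univ : Finset (Fin 3))).card = 3 := by decide

section vals
variable {f : PowerSeries ℂ}

lemma r1g (g : PowerSeries ℂ) : rescale (1:ℂ) g = g := by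
  rw [rescale_one]; rfl

lemma r0gen (s : ℕ) (f : PowerSeries ℂ) : rescale (0:ℂ) (derivativeFun^[s] f) =
    PowerSeries.C ((s.descFactorial s : ℂ) * PowerSeries.coeff s f) := by
  rw [rescale_zero]
  simp only [RingHom.coe_comp, Function.comp_apply]
  rw [← PowerSeries.coeff_zero_eq_constantCoeff_apply, coeff_iter_deriv]
  norm_num

lemma r00 (h0 : PowerSeries.constantCoeff f = 0) : rescale (0:ℂ) f = 0 := by
  have := r0gen 0 f
  simp only [Function.iterate_zero_apply] at this
  rw [this]
  simp [PowerSeries.coeff_zero_eq_constantCoeff_apply, h0]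

lemma r01 (h1 : PowerSeries.coeff 1 f = 1) :
    rescale (0:ℂ) (derivativeFun f) = 1 := by
  have := r0gen 1 f
  simp only [Function.iterate_one] at this
  rw [this, h1]
  norm_num

lemma r02 (h2 : PowerSeries.coeff 2 f = 0) :
    rescale (0:ℂ) (derivativeFun^[2] f) = 0 := by
  rw [r0gen 2 f, h2]
  norm_num

lemma r02' (h2 : PowerSeries.coeff 2 f = 0) :
    rescale (0:ℂ) (derivativeFun (derivativeFun f)) = 0 := by
  have := r02 h2
  rwa [show derivativeFun^[2] f = derivativeFun (derivativeFun f) from rfl] at this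

lemma r03 (h3 : PowerSeries.coeff 3 f = 0) :
    rescale (0:ℂ) (derivativeFun^[3] f) = 0 := by
  rw [r0gen 3 f, h3]
  norm_num

lemma r03' (h3 : PowerSeries.coeff 3 f = 0) :
    rescale (0:ℂ) (derivativeFun (derivativeFun (derivativeFun f))) = 0 := by
  have := r03 h3
  rwa [show derivativeFun^[3] f = derivativeFun (derivativeFun (derivativeFun f)) from rfl] at this

end vals

lemma vA1_0 : (![0,0,1,1] : Fin 4 → ℂ) 0 = 0 := rfl
lemma vA1_1 : (![0,0,1,1] : Fin 4 → ℂ) ((0 : Fin 3).succ) = 0 := rfl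
lemma vA1_2 : (![0,0,1,1] : Fin 4 → ℂ) ((1 : Fin 3).succ) = 1 := rfl
lemma vA1_3 : (![0,0,1,1] : Fin 4 → ℂ) ((2 : Fin 3).succ) = 1 := rfl
lemma vA2_0 : (![1,-1,0,0] : Fin 4 → ℂ) 0 = 1 := rfl
lemma vA2_1 : (![1,-1,0,0] : Fin 4 → ℂ) ((0 : Fin 3).succ) = -1 := rfl
lemma vA2_2 : (![1,-1,0,0] : Fin 4 → ℂ) ((1 : Fin 3).succ) = 0 := rfl
lemma vA2_3 : (![1,-1,0,0] : Fin 4 → ℂ) ((2 : Fin 3).succ) = 0 := rfl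
lemma vA3_0 : (![1,0,1,0] : Fin 4 → ℂ) 0 = 1 := rfl
lemma vA3_1 : (![1,0,1,0] : Fin 4 → ℂ) ((0 : Fin 3).succ) = 0 := rfl
lemma vA3_2 : (![1,0,1,0] : Fin 4 → ℂ) ((1 : Fin 3).succ) = 1 := rfl
lemma vA3_3 : (![1,0,1,0] : Fin 4 → ℂ) ((2 : Fin 3).succ) = 0 := rfl
lemma vA4_0 : (![0,1,0,1] : Fin 4 → ℂ) 0 = 0 := rfl
lemma vA4_1 : (![0,1,0,1] : Fin 4 → ℂ) ((0 : Fin 3).succ) = 1 := rfl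
lemma vA4_2 : (![0,1,0,1] : Fin 4 → ℂ) ((1 : Fin 3).succ) = 0 := rfl
lemma vA4_3 : (![0,1,0,1] : Fin 4 → ℂ) ((2 : Fin 3).succ) = 1 := rfl
lemma vB1_0 : (![0,0,0,1] : Fin 4 → ℂ) 0 = 0 := rfl
lemma vB1_1 : (![0,0,0,1] : Fin 4 → ℂ) ((0 : Fin 3).succ) = 0 := rfl
lemma vB1_2 : (![0,0,0,1] : Fin 4 → ℂ) ((1 : Fin 3).succ) = 0 := rfl
lemma vB1_3 : (![0,0,0,1] : Fin 4 → ℂ) ((2 : Fin 3).succ) = 1 := rfl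
lemma vB2_0 : (![1,0,0,0] : Fin 4 → ℂ) 0 = 1 := rfl
lemma vB2_1 : (![1,0,0,0] : Fin 4 → ℂ) ((0 : Fin 3).succ) = 0 := rfl
lemma vB2_2 : (![1,0,0,0] : Fin 4 → ℂ) ((1 : Fin 3).succ) = 0 := rfl
lemma vB2_3 : (![1,0,0,0] : Fin 4 → ℂ) ((2 : Fin 3).succ) = 0 := rfl
lemma vB3_0 : (![1,-1,1,0] : Fin 4 → ℂ) 0 = 1 := rfl
lemma vB3_1 : (![1,-1,1,0] : Fin 4 → ℂ) ((0 : Fin 3).succ) = -1 := rfl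
lemma vB3_2 : (![1,-1,1,0] : Fin 4 → ℂ) ((1 : Fin 3).succ) = 1 := rfl
lemma vB3_3 : (![1,-1,1,0] : Fin 4 → ℂ) ((2 : Fin 3).succ) = 0 := rfl
lemma vB4_0 : (![0,1,1,1] : Fin 4 → ℂ) 0 = 0 := rfl
lemma vB4_1 : (![0,1,1,1] : Fin 4 → ℂ) ((0 : Fin 3).succ) = 1 := rfl
lemma vB4_2 : (![0,1,1,1] : Fin 4 → ℂ) ((1 : Fin 3).succ) = 1 := rfl
lemma vB4_3 : (![0,1,1,1] : Fin 4 → ℂ) ((2 : Fin 3).succ) = 1 := rfl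
lemma vC1_0 : (![0,0,1,0] : Fin 4 → ℂ) 0 = 0 := rfl
lemma vC1_1 : (![0,0,1,0] : Fin 4 → ℂ) ((0 : Fin 3).succ) = 0 := rfl
lemma vC1_2 : (![0,0,1,0] : Fin 4 → ℂ) ((1 : Fin 3).succ) = 1 := rfl
lemma vC1_3 : (![0,0,1,0] : Fin 4 → ℂ) ((2 : Fin 3).succ) = 0 := rfl
lemma vC2_0 : (![0,1,0,0] : Fin 4 → ℂ) 0 = 0 := rfl
lemma vC2_1 : (![0,1,0,0] : Fin 4 → ℂ) ((0 : Fin 3).succ) = 1 := rfl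
lemma vC2_2 : (![0,1,0,0] : Fin 4 → ℂ) ((1 : Fin 3).succ) = 0 := rfl
lemma vC2_3 : (![0,1,0,0] : Fin 4 → ℂ) ((2 : Fin 3).succ) = 0 := rfl
lemma vC3_0 : (![1,0,1,1] : Fin 4 → ℂ) 0 = 1 := rfl
lemma vC3_1 : (![1,0,1,1] : Fin 4 → ℂ) ((0 : Fin 3).succ) = 0 := rfl
lemma vC3_2 : (![1,0,1,1] : Fin 4 → ℂ) ((1 : Fin 3).succ) = 1 := rfl
lemma vC3_3 : (![1,0,1,1] : Fin 4 → ℂ) ((2 : Fin 3).succ) = 1 := rfl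
lemma vC4_0 : (![-1,1,0,1] : Fin 4 → ℂ) 0 = -1 := rfl
lemma vC4_1 : (![-1,1,0,1] : Fin 4 → ℂ) ((0 : Fin 3).succ) = 1 := rfl
lemma vC4_2 : (![-1,1,0,1] : Fin 4 → ℂ) ((1 : Fin 3).succ) = 0 := rfl
lemma vC4_3 : (![-1,1,0,1] : Fin 4 → ℂ) ((2 : Fin 3).succ) = 1 := rfl


lemma it2 (f : PowerSeries ℂ) : PowerSeries.derivativeFun^[2] f
    = derivativeFun (derivativeFun f) := rfl
lemma it3 (f : PowerSeries ℂ) : PowerSeries.derivativeFun^[3] f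
    = derivativeFun (derivativeFun (derivativeFun f)) := rfl
lemma univ_enum : (Finset.univ : Finset (Finset (Fin 3))) =
    {∅, {0}, {1}, {2}, {0,1}, {0,2}, {1,2}, {0,1,2}} := by decide

section cc
variable {f : PowerSeries ℂ}
lemma cc1 (h1 : PowerSeries.coeff 1 f = 1) :
    PowerSeries.constantCoeff (derivativeFun f) = 1 := by
  rw [← PowerSeries.coeff_zero_eq_constantCoeff_apply, coeff_derivativeFun', h1]
  norm_num
lemma cc2 (h2 : PowerSeries.coeff 2 f = 0) :
    PowerSeries.constantCoeff (derivativeFun (derivativeFun f)) = 0 := by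
  rw [← PowerSeries.coeff_zero_eq_constantCoeff_apply, coeff_derivativeFun',
    coeff_derivativeFun', h2]
  norm_num
lemma cc3 (h3 : PowerSeries.coeff 3 f = 0) :
    PowerSeries.constantCoeff (derivativeFun (derivativeFun (derivativeFun f))) = 0 := by
  rw [← PowerSeries.coeff_zero_eq_constantCoeff_apply, coeff_derivativeFun',
    coeff_derivativeFun', coeff_derivativeFun', h3]
  norm_num
end cc


lemma phi_add (S : Finset (Fin 3)) (F G : MvPowerSeries (Fin 4) ℂ) :
    phi S (F + G) = phi S F + phi S G := by
  ext n; simp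

lemma phi_sub (S : Finset (Fin 3)) (F G : MvPowerSeries (Fin 4) ℂ) :
    phi S (F - G) = phi S F - phi S G := by
  ext n; simp

lemma phi_zero (S : Finset (Fin 3)) : phi S (0 : MvPowerSeries (Fin 4) ℂ) = 0 := by
  ext n; simp

lemma term2val (f : PowerSeries ℂ)
    (h0 : PowerSeries.constantCoeff f = 0)
    (h1 : PowerSeries.coeff 1 f = 1)
    (h2 : PowerSeries.coeff 2 f = 0)
    (h3 : PowerSeries.coeff 3 f = 0) :
    phi Finset.univ (linSub ![0,0,0,1] f * linSub ![1,0,0,0] f * linSub ![1,-1,1,0] f *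
      linSub ![0,1,1,1] f) = 0 := by
  simp only [phi_mul, phi_linSub]
  simp (config := { decide := true }) [univ_enum, pw_e, sd_e_e, sd_e_0, sd_e_1, sd_e_2, sd_e_01, sd_e_02, sd_e_12, sd_e_012, cd_e, pw_0, sd_0_e, sd_0_0, sd_0_1, sd_0_2, sd_0_01, sd_0_02, sd_0_12, sd_0_012, cd_0, pw_1, sd_1_e, sd_1_0, sd_1_1, sd_1_2, sd_1_01, sd_1_02, sd_1_12, sd_1_012, cd_1, pw_2, sd_2_e, sd_2_0, sd_2_1, sd_2_2, sd_2_01, sd_2_02, sd_2_12, sd_2_012, cd_2, pw_01, sd_01_e, sd_01_0, sd_01_1, sd_01_2, sd_01_01, sd_01_02, sd_01_12, sd_01_012, cd_01, pw_02, sd_02_e, sd_02_0, sd_02_1, sd_02_2, sd_02_01, sd_02_02, sd_02_12, sd_02_012, cd_02, pw_12, sd_12_e, sd_12_0, sd_12_1, sd_12_2, sd_12_01, sd_12_02, sd_12_12, sd_12_012, cd_12, pw_012, sd_012_e, sd_012_0, sd_012_1, sd_012_2, sd_012_01, sd_012_02, sd_012_12, sd_012_012, cd_012, pw_u, sd_u_e,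 sd_u_0, sd_u_1, sd_u_2, sd_u_01, sd_u_02, sd_u_12, sd_u_012, cd_u, Finset.sum_insert, Finset.prod_insert,
    it2, it3, h0, h1, h2, h3, cc1 h1, cc2 h2, cc3 h3]

lemma term1val (f : PowerSeries ℂ)
    (h0 : PowerSeries.constantCoeff f = 0)
    (h1 : PowerSeries.coeff 1 f = 1)
    (h2 : PowerSeries.coeff 2 f = 0)
    (h3 : PowerSeries.coeff 3 f = 0) :
    phi Finset.univ (linSub ![0,0,1,1] f * linSub ![1,-1,0,0] f * linSub ![1,0,1,0] f *
      linSub ![0,1,0,1] f) = 0 := by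
  simp only [phi_mul, phi_linSub]
  simp (config := { decide := true }) [univ_enum, pw_e, sd_e_e, sd_e_0, sd_e_1, sd_e_2, sd_e_01, sd_e_02, sd_e_12, sd_e_012, cd_e, pw_0, sd_0_e, sd_0_0, sd_0_1, sd_0_2, sd_0_01, sd_0_02, sd_0_12, sd_0_012, cd_0, pw_1, sd_1_e, sd_1_0, sd_1_1, sd_1_2, sd_1_01, sd_1_02, sd_1_12, sd_1_012, cd_1, pw_2, sd_2_e, sd_2_0, sd_2_1, sd_2_2, sd_2_01, sd_2_02, sd_2_12, sd_2_012, cd_2, pw_01, sd_01_e, sd_01_0, sd_01_1, sd_01_2, sd_01_01, sd_01_02, sd_01_12, sd_01_012, cd_01, pw_02, sd_02_e, sd_02_0, sd_02_1, sd_02_2, sd_02_01, sd_02_02, sd_02_12, sd_02_012, cd_02, pw_12, sd_12_e, sd_12_0, sd_12_1, sd_12_2, sd_12_01, sd_12_02, sd_12_12, sd_12_012, cd_12, pw_012, sd_012_e, sd_012_0, sd_012_1, sd_012_2, sd_012_01, sd_012_02, sd_012_12, sd_012_012, cd_012, pw_u, sd_u_e, sd_u_0, sd_u_1, sd_u_2,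 sd_u_01, sd_u_02, sd_u_12, sd_u_012, cd_u, Finset.sum_insert, Finset.prod_insert,
    it2, it3, h0, h1, h2, h3, cc1 h1, cc2 h2, cc3 h3]
  ring

lemma term3val (f : PowerSeries ℂ)
    (h0 : PowerSeries.constantCoeff f = 0)
    (h1 : PowerSeries.coeff 1 f = 1)
    (h2 : PowerSeries.coeff 2 f = 0)
    (h3 : PowerSeries.coeff 3 f = 0) :
    phi Finset.univ (linSub ![0,0,1,0] f * linSub ![0,1,0,0] f * linSub ![1,0,1,1] f *
      linSub ![-1,1,0,1] f) = f * rescale (-1) (derivativeFun f)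
      + rescale (-1) f * derivativeFun f := by
  simp only [phi_mul, phi_linSub]
  simp (config := { decide := true }) [univ_enum, pw_e, sd_e_e, sd_e_0, sd_e_1, sd_e_2, sd_e_01, sd_e_02, sd_e_12, sd_e_012, cd_e, pw_0, sd_0_e, sd_0_0, sd_0_1, sd_0_2, sd_0_01, sd_0_02, sd_0_12, sd_0_012, cd_0, pw_1, sd_1_e, sd_1_0, sd_1_1, sd_1_2, sd_1_01, sd_1_02, sd_1_12, sd_1_012, cd_1, pw_2, sd_2_e, sd_2_0, sd_2_1, sd_2_2, sd_2_01, sd_2_02, sd_2_12, sd_2_012, cd_2, pw_01, sd_01_e, sd_01_0, sd_01_1, sd_01_2, sd_01_01, sd_01_02, sd_01_12, sd_01_012, cd_01, pw_02, sd_02_e, sd_02_0, sd_02_1, sd_02_2, sd_02_01, sd_02_02, sd_02_12, sd_02_012, cd_02, pw_12, sd_12_e, sd_12_0, sd_12_1, sd_12_2, sd_12_01, sd_12_02, sd_12_12, sd_12_012, cd_12, pw_012, sd_012_e, sd_012_0, sd_012_1, sd_012_2, sd_012_01, sd_012_02, sd_012_12, sd_012_012, cd_012, pw_u, sd_u_e,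 sd_u_0, sd_u_1, sd_u_2, sd_u_01, sd_u_02, sd_u_12, sd_u_012, cd_u, Finset.sum_insert, Finset.prod_insert,
    it2, it3, h0, h1, h2, h3, cc1 h1, cc2 h2, cc3 h3]
  ring

lemma even_coeff_zero (f : PowerSeries ℂ)
    (h0 : PowerSeries.constantCoeff f = 0)
    (h1 : PowerSeries.coeff 1 f = 1)
    (hB : f * PowerSeries.rescale (-1) (PowerSeries.derivativeFun f)
        + PowerSeries.rescale (-1) f * PowerSeries.derivativeFun f = 0) :
    ∀ m, Even m → PowerSeries.coeff m f = 0 := by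
  intro m
  induction m using Nat.strong_induction_on with
  | _ m ih =>
  intro hm
  rcases Nat.eq_zero_or_pos m with hm0 | hpos
  · subst hm0
    rw [PowerSeries.coeff_zero_eq_constantCoeff_apply]
    exact h0
  have hm2 : 2 ≤ m := by
    rcases hm with ⟨r, hr⟩; omega
  have hc := congrArg (PowerSeries.coeff m) hB
  rw [map_add, PowerSeries.coeff_mul, PowerSeries.coeff_mul, map_zero,
    ← Finset.sum_add_distrib, Finset.Nat.sum_antidiagonal_eq_sum_range_succ_mk] at hc
  have key : ∀ k ∈ Finset.range (m+1),
      (PowerSeries.coeff k f *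
        PowerSeries.coeff (m-k) (PowerSeries.rescale (-1) (PowerSeries.derivativeFun f))
       + PowerSeries.coeff k (PowerSeries.rescale (-1) f) *
        PowerSeries.coeff (m-k) (PowerSeries.derivativeFun f))
      = (if k = m then 2 * PowerSeries.coeff m f else 0)
        + (if k = 1 then -(2*m) * PowerSeries.coeff m f else 0) := by
    intro k hk
    rw [Finset.mem_range] at hk
    simp only [PowerSeries.coeff_rescale, coeff_derivativeFun']
    by_cases hkm : k = m
    · subst hkm
      have hne1 : ¬ (k = 1) := by omega
      simp only [Nat.sub_self, zero_add, if_pos rfl, if_neg hne1, h1,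
        Even.neg_one_pow hm, pow_zero]
      push_cast
      ring
    by_cases hk1 : k = 1
    · subst hk1
      have hsub : m - 1 + 1 = m := by omega
      have hodd : Odd (m - 1) := by
        rw [Nat.odd_iff]; rw [Nat.even_iff] at hm; omega
      rw [hsub, if_neg hkm, if_pos rfl, Odd.neg_one_pow hodd, h1, pow_one,
        Nat.cast_sub (by omega : 1 ≤ m)]
      push_cast
      ring
    · rw [if_neg hkm, if_neg hk1, add_zero]
      rcases Nat.even_or_odd k with hek | hok
      · have hklt : k < m := by omega
        rw [ih k hklt hek]
        ring
      · have hj : Even (m - k + 1) := by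
          rw [Nat.even_iff] at hm ⊢; rw [Nat.odd_iff] at hok; omega
        have hjlt : m - k + 1 < m := by
          rw [Nat.odd_iff] at hok; omega
        rw [ih (m - k + 1) hjlt hj]
        ring
  rw [Finset.sum_congr rfl key, Finset.sum_add_distrib,
    Finset.sum_ite_eq' (Finset.range (m+1)) m,
    Finset.sum_ite_eq' (Finset.range (m+1)) 1] at hc
  have hmm : m ∈ Finset.range (m+1) := by simp
  have hm1 : (1:ℕ) ∈ Finset.range (m+1) := by simp; omega
  rw [if_pos hmm, if_pos hm1] at hc
  have hfac : (2 - 2*(m:ℂ)) * PowerSeries.coeff m f = 0 := by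
    linear_combination hc
  rcases mul_eq_zero.mp hfac with h | h
  · exfalso
    have : ((m:ℂ)) = 1 := by linear_combination (-(1:ℂ)/2) * h
    have : m = 1 := by exact_mod_cast this
    omega
  · exact h

theorem stmt2 (f : PowerSeries ℂ)
    (h0 : PowerSeries.constantCoeff f = 0)
    (h1 : PowerSeries.coeff 1 f = 1)
    (h2 : PowerSeries.coeff 2 f = 0)   -- f''(0) = 0
    (h3 : PowerSeries.coeff 3 f = 0)   -- f'''(0) = 0
    -- `f(a+b)f(x-y)f(a+x)f(b+y) - f(b)f(x)f(a+x-y)f(a+b+y) + f(a)f(y)f(a+b+x)f(b-x+y) = 0`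
    (hrel : linSub ![0,0,1,1] f * linSub ![1,-1,0,0] f * linSub ![1,0,1,0] f * linSub ![0,1,0,1] f
      - linSub ![0,0,0,1] f * linSub ![1,0,0,0] f * linSub ![1,-1,1,0] f * linSub ![0,1,1,1] f
      + linSub ![0,0,1,0] f * linSub ![0,1,0,0] f * linSub ![1,0,1,1] f * linSub ![-1,1,0,1] f
      = 0) :
    -- `f(x)·(f(x)·f'(-x) + f(-x)·f'(x)) = 0`
    f * (f * PowerSeries.rescale (-1) (PowerSeries.derivativeFun f)
        + PowerSeries.rescale (-1) f * PowerSeries.derivativeFun f) = 0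
    -- and `f(-x) = -f(x)`
    ∧ PowerSeries.rescale (-1) f = -f := by
  have hB : f * PowerSeries.rescale (-1) (PowerSeries.derivativeFun f)
      + PowerSeries.rescale (-1) f * PowerSeries.derivativeFun f = 0 := by
    have h := congrArg (phi Finset.univ) hrel
    rw [phi_add, phi_sub, phi_zero, term1val f h0 h1 h2 h3, term2val f h0 h1 h2 h3,
      term3val f h0 h1 h2 h3] at h
    simpa using h
  have hev := even_coeff_zero f h0 h1 hB
  refine ⟨by rw [hB, mul_zero], ?_⟩
  ext n
  rw [PowerSeries.coeff_rescale, map_neg]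
  rcases Nat.even_or_odd n with he | ho
  · rw [hev n he]; ring
  · rw [Odd.neg_one_pow ho]; ring
end

section
/- Let f ∈ ℂ[[x]] be an odd formal power series with f(0)=0, f'(0)=1, f''(0)=f'''(0)=0 satisfying the blow-up relation R = f(a+b)f(x-y)f(a+x)f(b+y) - f(b)f(x)f(a+x-y)f(a+b+y) + f(a)f(y)f(a+b+x)f(b-x+y) = 0. Then f satisfies the fourth-order differential equation 3f''(x)² - 4f'(x)f⁽³⁾(x) + f(x)f⁽⁴⁾(x) + f(x)²·f⁽⁵⁾(0) = 0. -/
/-- `k`-th formal derivative of a power series. -/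
noncomputable def Dn {R : Type*} [CommRing R] (k : ℕ) (f : PowerSeries R) : PowerSeries R :=
  (PowerSeries.derivativeFun (R := R))^[k] f

namespace BlowupAux

open Finset

/-- exponent vector -/
noncomputable def e (p j k l : ℕ) : Fin 4 →₀ ℕ := Finsupp.equivFunOnFinite.symm ![p, j, k, l]

@[simp] lemma e_apply0 (p j k l : ℕ) : e p j k l 0 = p := rfl
@[simp] lemma e_apply1 (p j k l : ℕ) : e p j k l 1 = j := rfl
@[simp] lemma e_apply2 (p j k l : ℕ) : e p j k l 2 = k := rfl
@[simp] lemma e_apply3 (p j k l : ℕ) : e p j k l 3 = l := rfl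

lemma e_eq (d : Fin 4 →₀ ℕ) : e (d 0) (d 1) (d 2) (d 3) = d := by
  ext i; fin_cases i <;> rfl

lemma eq_e_of {u : Fin 4 →₀ ℕ} {p j k l : ℕ}
    (hp : u 0 = p) (hj : u 1 = j) (hk : u 2 = k) (hl : u 3 = l) : u = e p j k l := by
  rw [← hp, ← hj, ← hk, ← hl]; exact (e_eq u).symm

lemma e_add (p j k l p' j' k' l' : ℕ) :
    e p j k l + e p' j' k' l' = e (p + p') (j + j') (k + k') (l + l') := by
  ext i; fin_cases i <;> simp

lemma sum_e (p j k l : ℕ) : (∑ i, (e p j k l) i) = p + j + k + l := by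
  rw [Fin.sum_univ_four]; simp

lemma add_coords {w z u : Fin 4 →₀ ℕ} (h : w + z = u) (i : Fin 4) : w i + z i = u i := by
  rw [← h]; simp

end BlowupAux

namespace BlowupAux
open Finset PowerSeries

lemma coeff_linSub (c : Fin 4 → ℂ) (f : PowerSeries ℂ) (d : Fin 4 →₀ ℕ) :
    MvPowerSeries.coeff d (linSub c f)
      = PowerSeries.coeff (∑ i, d i) f * (Nat.multinomial Finset.univ d : ℂ) *
        ∏ i, c i ^ d i := by
  rw [MvPowerSeries.coeff_apply]; rfl

lemma supp_of {c : Fin 4 → ℂ} {f : PowerSeries ℂ} {d : Fin 4 →₀ ℕ}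
    (h : MvPowerSeries.coeff d (linSub c f) ≠ 0) (i : Fin 4) (hc : c i = 0) : d i = 0 := by
  by_contra hd
  apply h
  rw [coeff_linSub]
  have : ∏ i, c i ^ d i = 0 :=
    Finset.prod_eq_zero (Finset.mem_univ i) (by rw [hc]; exact zero_pow hd)
  rw [this, mul_zero]

lemma coeff_f_ne_of {c : Fin 4 → ℂ} {f : PowerSeries ℂ} {d : Fin 4 →₀ ℕ}
    (h : MvPowerSeries.coeff d (linSub c f) ≠ 0) :
    PowerSeries.coeff (∑ i, d i) f ≠ 0 := by
  intro h'
  apply h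
  rw [coeff_linSub, h', zero_mul, zero_mul]

lemma exists_split {g h : MvPowerSeries (Fin 4) ℂ} {u : Fin 4 →₀ ℕ}
    (H : MvPowerSeries.coeff u (g * h) ≠ 0) :
    ∃ w z, w + z = u ∧ MvPowerSeries.coeff w g ≠ 0 ∧ MvPowerSeries.coeff z h ≠ 0 := by
  rw [MvPowerSeries.coeff_mul] at H
  obtain ⟨p, hp, hne⟩ := Finset.exists_ne_zero_of_sum_ne_zero H
  exact ⟨p.1, p.2, Finset.HasAntidiagonal.mem_antidiagonal.1 hp,
    left_ne_zero_of_mul hne, right_ne_zero_of_mul hne⟩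

lemma Dn_zero {R : Type*} [CommRing R] (f : PowerSeries R) : Dn 0 f = f := rfl

lemma Dn_succ {R : Type*} [CommRing R] (k : ℕ) (f : PowerSeries R) :
    Dn (k + 1) f = PowerSeries.derivativeFun (Dn k f) :=
  Function.iterate_succ_apply' _ _ _

lemma coeff_Dn (m n : ℕ) (f : PowerSeries ℂ) :
    (n.factorial : ℂ) * PowerSeries.coeff n (Dn m f)
      = ((n + m).factorial : ℂ) * PowerSeries.coeff (n + m) f := by
  induction m generalizing n with
  | zero => simp [Dn_zero]
  | succ m ih =>
    rw [Dn_succ, show (Dn m f).derivativeFun = PowerSeries.derivative ℂ (Dn m f) from rfl,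
      PowerSeries.coeff_derivative]
    have h1 := ih (n + 1)
    rw [show n + 1 + m = n + (m + 1) from by ring] at h1
    have h2 : ((n + 1).factorial : ℂ) = (n + 1) * n.factorial := by
      rw [Nat.factorial_succ]; push_cast; ring
    rw [h2] at h1
    push_cast at h1 ⊢
    linear_combination h1

/-- slice: coefficient of y^j a^k b^l, as a power series in x -/
noncomputable def slice (j k l : ℕ) (g : MvPowerSeries (Fin 4) ℂ) : PowerSeries ℂ :=
  PowerSeries.mk fun n => MvPowerSeries.coeff (e n j k l) g

@[simp] lemma coeff_slice (j k l n : ℕ) (g : MvPowerSeries (Fin 4) ℂ) :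
    PowerSeries.coeff n (slice j k l g) = MvPowerSeries.coeff (e n j k l) g :=
  PowerSeries.coeff_mk _ _

end BlowupAux

namespace BlowupAux
open Finset PowerSeries

lemma coeff_mul_single {g h : MvPowerSeries (Fin 4) ℂ} {d u₀ v₀ : Fin 4 →₀ ℕ}
    (hd : u₀ + v₀ = d)
    (H : ∀ u v, u + v = d → MvPowerSeries.coeff u g ≠ 0 →
      MvPowerSeries.coeff v h ≠ 0 → u = u₀) :
    MvPowerSeries.coeff d (g * h)
      = MvPowerSeries.coeff u₀ g * MvPowerSeries.coeff v₀ h := by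
  rw [MvPowerSeries.coeff_mul]
  apply Finset.sum_eq_single_of_mem (u₀, v₀) (Finset.HasAntidiagonal.mem_antidiagonal.2 hd)
  rintro ⟨u, v⟩ hm hne
  by_contra hterm
  have hu : MvPowerSeries.coeff u g ≠ 0 := left_ne_zero_of_mul hterm
  have hv : MvPowerSeries.coeff v h ≠ 0 := right_ne_zero_of_mul hterm
  have huv := Finset.HasAntidiagonal.mem_antidiagonal.1 hm
  have hu0 : u = u₀ := H u v huv hu hv
  have hv0 : v = v₀ := by
    have h' : u₀ + v = u₀ + v₀ := by rw [hd, ← huv, hu0]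
    exact add_left_cancel h'
  exact hne (by rw [hu0, hv0])

lemma slice_mul_left {G H : MvPowerSeries (Fin 4) ℂ} (j k l j' k' l' J K L : ℕ)
    (hJ : j + j' = J) (hK : k + k' = K) (hL : l + l' = L)
    (hyp : ∀ (n : ℕ) (u v : Fin 4 →₀ ℕ), u + v = e n J K L →
      MvPowerSeries.coeff u G ≠ 0 → MvPowerSeries.coeff v H ≠ 0 → u = e 0 j k l) :
    slice J K L (G * H)
      = PowerSeries.C (MvPowerSeries.coeff (e 0 j k l) G) * slice j' k' l' H := by
  subst hJ hK hL
  ext n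
  rw [coeff_slice, PowerSeries.coeff_C_mul, coeff_slice]
  exact coeff_mul_single (by rw [e_add, zero_add]) (hyp n)

lemma slice_mul_left_two {G H : MvPowerSeries (Fin 4) ℂ}
    (j₁ k₁ l₁ j₁' k₁' l₁' j₂ k₂ l₂ j₂' k₂' l₂' J K L : ℕ)
    (hJ₁ : j₁ + j₁' = J) (hK₁ : k₁ + k₁' = K) (hL₁ : l₁ + l₁' = L)
    (hJ₂ : j₂ + j₂' = J) (hK₂ : k₂ + k₂' = K) (hL₂ : l₂ + l₂' = L)
    (hne : e 0 j₁ k₁ l₁ ≠ e 0 j₂ k₂ l₂)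
    (hyp : ∀ (n : ℕ) (u v : Fin 4 →₀ ℕ), u + v = e n J K L →
      MvPowerSeries.coeff u G ≠ 0 → MvPowerSeries.coeff v H ≠ 0 →
      u = e 0 j₁ k₁ l₁ ∨ u = e 0 j₂ k₂ l₂) :
    slice J K L (G * H)
      = PowerSeries.C (MvPowerSeries.coeff (e 0 j₁ k₁ l₁) G) * slice j₁' k₁' l₁' H
        + PowerSeries.C (MvPowerSeries.coeff (e 0 j₂ k₂ l₂) G) * slice j₂' k₂' l₂' H := by
  subst hJ₁ hK₁ hL₁
  ext n
  rw [map_add, PowerSeries.coeff_C_mul, PowerSeries.coeff_C_mul,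
    coeff_slice, coeff_slice, coeff_slice, MvPowerSeries.coeff_mul]
  have hd₁ : e 0 j₁ k₁ l₁ + e n j₁' k₁' l₁' = e n (j₁ + j₁') (k₁ + k₁') (l₁ + l₁') := by
    rw [e_add, zero_add]
  have hd₂ : e 0 j₂ k₂ l₂ + e n j₂' k₂' l₂' = e n (j₁ + j₁') (k₁ + k₁') (l₁ + l₁') := by
    rw [e_add, zero_add, hJ₂, hK₂, hL₂]
  have hpair : ((e 0 j₁ k₁ l₁, e n j₁' k₁' l₁') : _ × _) ≠ (e 0 j₂ k₂ l₂, e n j₂' k₂' l₂') := by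
    intro hcon
    exact hne (congrArg Prod.fst hcon)
  have hsub : ({(e 0 j₁ k₁ l₁, e n j₁' k₁' l₁'), (e 0 j₂ k₂ l₂, e n j₂' k₂' l₂')} :
      Finset ((Fin 4 →₀ ℕ) × (Fin 4 →₀ ℕ))) ⊆ antidiagonal (e n (j₁ + j₁') (k₁ + k₁') (l₁ + l₁')) := by
    intro x hx
    rcases Finset.mem_insert.1 hx with hx | hx
    · rw [hx]; exact Finset.HasAntidiagonal.mem_antidiagonal.2 hd₁
    · rw [Finset.mem_singleton.1 hx]; exact Finset.HasAntidiagonal.mem_antidiagonal.2 hd₂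
  rw [← Finset.sum_subset hsub ?van]
  · rw [Finset.sum_pair hpair]
  · rintro ⟨u, v⟩ hm hnotin
    by_contra hterm
    have hu : MvPowerSeries.coeff u G ≠ 0 := left_ne_zero_of_mul hterm
    have hv : MvPowerSeries.coeff v H ≠ 0 := right_ne_zero_of_mul hterm
    have huv := Finset.HasAntidiagonal.mem_antidiagonal.1 hm
    apply hnotin
    rcases hyp n u v huv hu hv with hcase | hcase
    · have hv0 : v = e n j₁' k₁' l₁' := by
        rw [hcase] at huv
        have h' : e 0 j₁ k₁ l₁ + v = e 0 j₁ k₁ l₁ + e n j₁' k₁' l₁' := by rw [hd₁]; exact huv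
        exact add_left_cancel h'
      rw [hcase, hv0]
      exact Finset.mem_insert_self _ _
    · have hv0 : v = e n j₂' k₂' l₂' := by
        rw [hcase] at huv
        have h' : e 0 j₂ k₂ l₂ + v = e 0 j₂ k₂ l₂ + e n j₂' k₂' l₂' := by rw [hd₂]; exact huv
        exact add_left_cancel h'
      rw [hcase, hv0]
      exact Finset.mem_insert_of_mem (Finset.mem_singleton_self _)

end BlowupAux

namespace BlowupAux
open Finset PowerSeries

lemma slice_mul_conv {G H : MvPowerSeries (Fin 4) ℂ} (j₁ k₁ j₂ k₂ J K L : ℕ)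
    (hJ : j₁ + j₂ = J) (hK : k₁ + k₂ = K)
    (hyp : ∀ (n : ℕ) (u v : Fin 4 →₀ ℕ), u + v = e n J K L →
      MvPowerSeries.coeff u G ≠ 0 → MvPowerSeries.coeff v H ≠ 0 →
      u 1 = j₁ ∧ u 2 = k₁) :
    slice J K L (G * H)
      = ∑ q ∈ Finset.HasAntidiagonal.antidiagonal L, slice j₁ k₁ q.1 G * slice j₂ k₂ q.2 H := by
  subst hJ hK
  ext n
  rw [coeff_slice, map_sum, MvPowerSeries.coeff_mul]
  have hterm : ∀ q ∈ Finset.HasAntidiagonal.antidiagonal L,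
      PowerSeries.coeff n (slice j₁ k₁ q.1 G * slice j₂ k₂ q.2 H)
        = ∑ p ∈ Finset.HasAntidiagonal.antidiagonal n,
            MvPowerSeries.coeff (e p.1 j₁ k₁ q.1) G * MvPowerSeries.coeff (e p.2 j₂ k₂ q.2) H := by
    intro q _
    rw [PowerSeries.coeff_mul]
    exact Finset.sum_congr rfl fun p _ => by rw [coeff_slice, coeff_slice]
  rw [Finset.sum_congr rfl hterm]
  have hinj : Function.Injective
      (fun x : (ℕ × ℕ) × (ℕ × ℕ) => ((e x.2.1 j₁ k₁ x.1.1, e x.2.2 j₂ k₂ x.1.2) :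
        (Fin 4 →₀ ℕ) × (Fin 4 →₀ ℕ))) := by
    intro x y hxy
    have h1 := congrArg (fun z => z.1 0) hxy
    have h2 := congrArg (fun z => z.1 3) hxy
    have h3 := congrArg (fun z => z.2 0) hxy
    have h4 := congrArg (fun z => z.2 3) hxy
    simp only [e_apply0, e_apply3] at h1 h2 h3 h4
    ext <;> assumption
  set emb : (ℕ × ℕ) × (ℕ × ℕ) ↪ (Fin 4 →₀ ℕ) × (Fin 4 →₀ ℕ) := ⟨_, hinj⟩ with hemb
  have hsub : (Finset.HasAntidiagonal.antidiagonal L ×ˢ Finset.HasAntidiagonal.antidiagonal n).map emb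
      ⊆ Finset.HasAntidiagonal.antidiagonal (e n (j₁ + j₂) (k₁ + k₂) L) := by
    intro x hx
    obtain ⟨y, hy, rfl⟩ := Finset.mem_map.1 hx
    obtain ⟨hy1, hy2⟩ := Finset.mem_product.1 hy
    have hl : y.1.1 + y.1.2 = L := Finset.HasAntidiagonal.mem_antidiagonal.1 hy1
    have hn : y.2.1 + y.2.2 = n := Finset.HasAntidiagonal.mem_antidiagonal.1 hy2
    apply Finset.HasAntidiagonal.mem_antidiagonal.2
    show e y.2.1 j₁ k₁ y.1.1 + e y.2.2 j₂ k₂ y.1.2 = _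
    rw [e_add, hl, hn]
  rw [← Finset.sum_subset hsub ?van]
  · rw [Finset.sum_map, Finset.sum_product]
    rfl
  · rintro ⟨u, v⟩ hm hnotin
    by_contra hterm'
    have hu : MvPowerSeries.coeff u G ≠ 0 := left_ne_zero_of_mul hterm'
    have hv : MvPowerSeries.coeff v H ≠ 0 := right_ne_zero_of_mul hterm'
    have huv := Finset.HasAntidiagonal.mem_antidiagonal.1 hm
    obtain ⟨hu1, hu2⟩ := hyp n u v huv hu hv
    apply hnotin
    have hc0 := add_coords huv 0
    have hc1 := add_coords huv 1
    have hc2 := add_coords huv 2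
    have hc3 := add_coords huv 3
    simp only [e_apply0, e_apply1, e_apply2, e_apply3] at hc0 hc1 hc2 hc3
    apply Finset.mem_map.2
    refine ⟨((u 3, v 3), (u 0, v 0)), ?_, ?_⟩
    · exact Finset.mem_product.2 ⟨Finset.HasAntidiagonal.mem_antidiagonal.2 hc3, Finset.HasAntidiagonal.mem_antidiagonal.2 hc0⟩
    · show (e (u 0) j₁ k₁ (u 3), e (v 0) j₂ k₂ (v 3)) = (u, v)
      have hueq : u = e (u 0) j₁ k₁ (u 3) := eq_e_of rfl hu1 hu2 rfl
      have hveq : v = e (v 0) j₂ k₂ (v 3) := eq_e_of rfl (by omega) (by omega) rfl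
      rw [← hueq, ← hveq]

end BlowupAux

namespace BlowupAux
open Finset PowerSeries

lemma multinomial_e (n j k l : ℕ) :
    ((Nat.multinomial Finset.univ (e n j k l) : ℕ) : ℂ)
        * ((n.factorial : ℂ) * j.factorial * k.factorial * l.factorial)
      = ((n + j + k + l).factorial : ℂ) := by
  have hs := Nat.multinomial_spec Finset.univ (e n j k l)
  have h1 : (∏ i, ((e n j k l) i).factorial)
      = n.factorial * j.factorial * k.factorial * l.factorial := by
    rw [Fin.prod_univ_four]; simp
  have h2 : (∑ i, (e n j k l) i) = n + j + k + l := sum_e n j k l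
  rw [h1, h2] at hs
  push_cast [← hs]
  ring

lemma slice_linSub (c : Fin 4 → ℂ) (f : PowerSeries ℂ) (j k l : ℕ) :
    slice j k l (linSub c f)
      = PowerSeries.rescale (c 0)
          (PowerSeries.C (c 1 ^ j * c 2 ^ k * c 3 ^ l
              * ((j.factorial : ℂ) * k.factorial * l.factorial)⁻¹)
            * Dn (j + k + l) f) := by
  ext n
  rw [coeff_slice, coeff_linSub, PowerSeries.coeff_rescale, PowerSeries.coeff_C_mul, sum_e]
  have hprod : (∏ i, c i ^ (e n j k l) i) = c 0 ^ n * c 1 ^ j * c 2 ^ k * c 3 ^ l := by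
    rw [Fin.prod_univ_four]; simp
  rw [hprod]
  have hfne : ((j.factorial : ℂ) * k.factorial * l.factorial) ≠ 0 := by
    refine mul_ne_zero (mul_ne_zero ?_ ?_) ?_ <;>
      exact_mod_cast Nat.cast_ne_zero.2 (Nat.factorial_ne_zero _)
  have hnne : ((n.factorial : ℂ)) ≠ 0 := Nat.cast_ne_zero.2 (Nat.factorial_ne_zero _)
  have hkey : PowerSeries.coeff (n + j + k + l) f
        * ((Nat.multinomial Finset.univ (e n j k l) : ℕ) : ℂ)
      = ((j.factorial : ℂ) * k.factorial * l.factorial)⁻¹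
        * PowerSeries.coeff n (Dn (j + k + l) f) := by
    rw [inv_mul_eq_div, eq_div_iff hfne]
    apply mul_left_cancel₀ hnne
    have hD := coeff_Dn (j + k + l) n f
    rw [show n + (j + k + l) = n + j + k + l from by ring] at hD
    have hm := multinomial_e n j k l
    linear_combination PowerSeries.coeff (n + j + k + l) f * hm - hD
  linear_combination (c 0 ^ n * c 1 ^ j * c 2 ^ k * c 3 ^ l) * hkey

lemma multinomial_e_nat (p j k l : ℕ) :
    (p.factorial * j.factorial * k.factorial * l.factorial)
        * Nat.multinomial Finset.univ (e p j k l) = (p + j + k + l).factorial := by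
  have hs := Nat.multinomial_spec Finset.univ (e p j k l)
  have h1 : (∏ i, ((e p j k l) i).factorial)
      = p.factorial * j.factorial * k.factorial * l.factorial := by
    rw [Fin.prod_univ_four]; simp
  rw [h1, sum_e] at hs
  exact hs

lemma rescale_C (a r : ℂ) :
    PowerSeries.rescale a (PowerSeries.C r) = PowerSeries.C r := by
  ext n
  rw [PowerSeries.coeff_rescale]
  cases n <;> simp [PowerSeries.coeff_C]

lemma rescale_C_mul (a r : ℂ) (g : PowerSeries ℂ) :
    PowerSeries.rescale a (PowerSeries.C r * g)
      = PowerSeries.C r * PowerSeries.rescale a g := by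
  ext n
  rw [PowerSeries.coeff_rescale, PowerSeries.coeff_C_mul, PowerSeries.coeff_C_mul,
    PowerSeries.coeff_rescale]
  ring

end BlowupAux

namespace BlowupAux
open Finset PowerSeries

lemma even_coeff_zero {f : PowerSeries ℂ} (hodd : PowerSeries.rescale (-1) f = -f)
    {m : ℕ} (hm : m % 2 = 0) : PowerSeries.coeff m f = 0 := by
  have h := congrArg (PowerSeries.coeff m) hodd
  rw [PowerSeries.coeff_rescale, map_neg] at h
  have : ((-1 : ℂ)) ^ m = 1 := Even.neg_one_pow (Nat.even_iff.2 hm)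
  rw [this, one_mul] at h
  have h2 : (2 : ℂ) * PowerSeries.coeff m f = 0 := by linear_combination h
  have := mul_eq_zero.1 h2
  simpa using this

lemma oddNe {f : PowerSeries ℂ} (hodd : PowerSeries.rescale (-1) f = -f)
    (h3 : PowerSeries.coeff 3 f = 0) {m : ℕ} (h : PowerSeries.coeff m f ≠ 0) :
    m % 2 = 1 ∧ m ≠ 3 := by
  constructor
  · by_contra hc
    exact h (even_coeff_zero hodd (by omega))
  · rintro rfl
    exact h h3

lemma Dn_coeff_zero {f : PowerSeries ℂ} {m n : ℕ}
    (h : PowerSeries.coeff (n + m) f = 0) : PowerSeries.coeff n (Dn m f) = 0 := by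
  have hD := coeff_Dn m n f
  rw [h, mul_zero] at hD
  have hnne : ((n.factorial : ℂ)) ≠ 0 := Nat.cast_ne_zero.2 (Nat.factorial_ne_zero _)
  exact (mul_eq_zero.1 hD).resolve_left hnne

lemma rescale_neg_Dn {f : PowerSeries ℂ} (hodd : PowerSeries.rescale (-1) f = -f) (m : ℕ) :
    PowerSeries.rescale (-1) (Dn m f) = PowerSeries.C ((-1) ^ (m + 1)) * Dn m f := by
  ext n
  rw [PowerSeries.coeff_rescale, PowerSeries.coeff_C_mul]
  by_cases hz : PowerSeries.coeff (n + m) f = 0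
  · rw [Dn_coeff_zero hz, mul_zero, mul_zero]
  · have hpar : (n + m) % 2 = 1 := by
      by_contra hc
      exact hz (even_coeff_zero hodd (by omega))
    have h1 : ((-1 : ℂ)) ^ n * (-1) ^ m = -1 := by
      rw [← pow_add]
      exact Odd.neg_one_pow (Nat.odd_iff.2 hpar)
    have h2 : (((-1 : ℂ)) ^ m) ^ 2 = 1 := by
      rw [← pow_mul]
      exact Even.neg_one_pow ⟨m, by ring⟩
    have h3 : ((-1 : ℂ)) ^ n = (-1) ^ (m + 1) := by
      rw [pow_succ]
      linear_combination ((-1 : ℂ) ^ m) * h1 - ((-1 : ℂ) ^ n) * h2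
    rw [h3]

end BlowupAux

open BlowupAux

theorem stmt3 (f : PowerSeries ℂ)
    (h0 : PowerSeries.constantCoeff f = 0)
    (h1 : PowerSeries.coeff 1 f = 1)
    (h2 : PowerSeries.coeff 2 f = 0)
    (h3 : PowerSeries.coeff 3 f = 0)
    (hodd : PowerSeries.rescale (-1) f = -f)
    (hrel : linSub ![0,0,1,1] f * linSub ![1,-1,0,0] f * linSub ![1,0,1,0] f * linSub ![0,1,0,1] f
      - linSub ![0,0,0,1] f * linSub ![1,0,0,0] f * linSub ![1,-1,1,0] f * linSub ![0,1,1,1] f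
      + linSub ![0,0,1,0] f * linSub ![0,1,0,0] f * linSub ![1,0,1,1] f * linSub ![-1,1,0,1] f
      = 0) :
    3 * (Dn 2 f) ^ 2 - 4 * Dn 1 f * Dn 3 f + f * Dn 4 f
      + PowerSeries.C (120 * PowerSeries.coeff 5 f) * f ^ 2 = 0 := by
  classical
  -- parity facts
  have hshape : ∀ (c : Fin 4 → ℂ) (d : Fin 4 →₀ ℕ),
      MvPowerSeries.coeff d (linSub c f) ≠ 0 →
      (d 0 + d 1 + d 2 + d 3) % 2 = 1 ∧ (d 0 + d 1 + d 2 + d 3) ≠ 3 := by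
    intro c d hd
    have h := oddNe hodd h3 (coeff_f_ne_of hd)
    rwa [Fin.sum_univ_four] at h
  ------------------------------------------------------------------
  -- value computations for explicit coefficients of linSub factors
  ------------------------------------------------------------------
  have hm0001 : Nat.multinomial Finset.univ (e 0 0 0 1) = 1 := by
    have h := multinomial_e_nat 0 0 0 1
    norm_num [Nat.factorial] at h
    omega
  have hm0010 : Nat.multinomial Finset.univ (e 0 0 1 0) = 1 := by
    have h := multinomial_e_nat 0 0 1 0
    norm_num [Nat.factorial] at h
    omega
  have hm0100 : Nat.multinomial Finset.univ (e 0 1 0 0) = 1 := by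
    have h := multinomial_e_nat 0 1 0 0
    norm_num [Nat.factorial] at h
    omega
  have hm0221 : Nat.multinomial Finset.univ (e 0 2 2 1) = 30 := by
    have h := multinomial_e_nat 0 2 2 1
    norm_num [Nat.factorial] at h
    omega
  have v1 : MvPowerSeries.coeff (e 0 0 0 1) (linSub ![0,0,1,1] f) = 1 := by
    rw [coeff_linSub, sum_e, hm0001, Fin.prod_univ_four]
    norm_num [Matrix.cons_val_two, Matrix.cons_val_three, h1]
  have v2 : MvPowerSeries.coeff (e 0 0 0 1) (linSub ![0,1,0,1] f) = 1 := by
    rw [coeff_linSub, sum_e, hm0001, Fin.prod_univ_four]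
    norm_num [Matrix.cons_val_two, Matrix.cons_val_three, h1]
  have v3 : MvPowerSeries.coeff (e 0 0 0 1) (linSub ![0,0,0,1] f) = 1 := by
    rw [coeff_linSub, sum_e, hm0001, Fin.prod_univ_four]
    norm_num [Matrix.cons_val_two, Matrix.cons_val_three, h1]
  have v4 : MvPowerSeries.coeff (e 0 0 0 1) (linSub ![0,1,1,1] f) = 1 := by
    rw [coeff_linSub, sum_e, hm0001, Fin.prod_univ_four]
    norm_num [Matrix.cons_val_two, Matrix.cons_val_three, h1]
  have v5 : MvPowerSeries.coeff (e 0 2 2 1) (linSub ![0,1,1,1] f)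
      = 30 * PowerSeries.coeff 5 f := by
    rw [coeff_linSub, sum_e, hm0221, Fin.prod_univ_four]
    norm_num [Matrix.cons_val_two, Matrix.cons_val_three]
    ring
  have v6 : MvPowerSeries.coeff (e 0 0 1 0) (linSub ![0,0,1,0] f) = 1 := by
    rw [coeff_linSub, sum_e, hm0010, Fin.prod_univ_four]
    norm_num [Matrix.cons_val_two, Matrix.cons_val_three, h1]
  have v7 : MvPowerSeries.coeff (e 0 1 0 0) (linSub ![0,1,0,0] f) = 1 := by
    rw [coeff_linSub, sum_e, hm0100, Fin.prod_univ_four]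
    norm_num [Matrix.cons_val_two, Matrix.cons_val_three, h1]
  ------------------------------------------------------------------
  -- pair coefficients (constant pairs)
  ------------------------------------------------------------------
  have w1 : MvPowerSeries.coeff (e 0 0 0 2) (linSub ![0,0,1,1] f * linSub ![0,1,0,1] f)
      = 1 := by
    rw [coeff_mul_single (u₀ := e 0 0 0 1) (v₀ := e 0 0 0 1) (by rw [e_add]) ?_, v1, v2, one_mul]
    intro u v huv hu hv
    have hu0 : u 0 = 0 := supp_of hu 0 (by simp)
    have hu1 : u 1 = 0 := supp_of hu 1 (by simp)
    have hv0 : v 0 = 0 := supp_of hv 0 (by simp)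
    have hv2 : v 2 = 0 := supp_of hv 2 (by simp)
    obtain ⟨hus, hus3⟩ := hshape _ _ hu
    obtain ⟨hvs, hvs3⟩ := hshape _ _ hv
    have hc0 : u 0 + v 0 = 0 := by simpa using add_coords huv 0
    have hc1 : u 1 + v 1 = 0 := by simpa using add_coords huv 1
    have hc2 : u 2 + v 2 = 0 := by simpa using add_coords huv 2
    have hc3 : u 3 + v 3 = 2 := by simpa using add_coords huv 3
    apply eq_e_of <;> omega
  have w2 : MvPowerSeries.coeff (e 0 0 0 2) (linSub ![0,0,0,1] f * linSub ![0,1,1,1] f)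
      = 1 := by
    rw [coeff_mul_single (u₀ := e 0 0 0 1) (v₀ := e 0 0 0 1) (by rw [e_add]) ?_, v3, v4, one_mul]
    intro u v huv hu hv
    have hu0 : u 0 = 0 := supp_of hu 0 (by simp)
    have hu1 : u 1 = 0 := supp_of hu 1 (by simp)
    have hu2 : u 2 = 0 := supp_of hu 2 (by simp)
    obtain ⟨hus, hus3⟩ := hshape _ _ hu
    have hc3 : u 3 + v 3 = 2 := by simpa using add_coords huv 3
    apply eq_e_of <;> omega
  have w3 : MvPowerSeries.coeff (e 0 2 2 2) (linSub ![0,0,0,1] f * linSub ![0,1,1,1] f)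
      = 30 * PowerSeries.coeff 5 f := by
    rw [coeff_mul_single (u₀ := e 0 0 0 1) (v₀ := e 0 2 2 1) (by rw [e_add]) ?_, v3, v5, one_mul]
    intro u v huv hu hv
    have hu0 : u 0 = 0 := supp_of hu 0 (by simp)
    have hu1 : u 1 = 0 := supp_of hu 1 (by simp)
    have hu2 : u 2 = 0 := supp_of hu 2 (by simp)
    obtain ⟨hus, hus3⟩ := hshape _ _ hu
    have hc3 : u 3 + v 3 = 2 := by simpa using add_coords huv 3
    apply eq_e_of <;> omega
  have w4 : MvPowerSeries.coeff (e 0 1 1 0) (linSub ![0,0,1,0] f * linSub ![0,1,0,0] f)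
      = 1 := by
    rw [coeff_mul_single (u₀ := e 0 0 1 0) (v₀ := e 0 1 0 0) (by rw [e_add]) ?_, v6, v7, one_mul]
    intro u v huv hu hv
    have hu0 : u 0 = 0 := supp_of hu 0 (by simp)
    have hu1 : u 1 = 0 := supp_of hu 1 (by simp)
    have hu3 : u 3 = 0 := supp_of hu 3 (by simp)
    obtain ⟨hus, hus3⟩ := hshape _ _ hu
    have hc2 : u 2 + v 2 = 1 := by simpa using add_coords huv 2
    apply eq_e_of <;> omega
  ------------------------------------------------------------------
  -- slices of single x-carrying factors
  ------------------------------------------------------------------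
  have sA1 : slice 2 0 0 (linSub ![1,-1,0,0] f) = PowerSeries.C 2⁻¹ * Dn 2 f := by
    rw [slice_linSub]
    norm_num [Nat.factorial, PowerSeries.rescale_one]
  have sA2 : slice 0 2 0 (linSub ![1,0,1,0] f) = PowerSeries.C 2⁻¹ * Dn 2 f := by
    rw [slice_linSub]
    norm_num [Matrix.cons_val_two, Matrix.cons_val_three, Nat.factorial, PowerSeries.rescale_one]
  have sB1 : slice 0 0 0 (linSub ![1,0,0,0] f) = f := by
    rw [slice_linSub]
    norm_num [Nat.factorial, PowerSeries.rescale_one, Dn_zero]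
  have sB2 : slice 2 2 0 (linSub ![1,-1,1,0] f) = PowerSeries.C 4⁻¹ * Dn 4 f := by
    rw [slice_linSub]
    norm_num [Matrix.cons_val_two, Matrix.cons_val_three, Nat.factorial, PowerSeries.rescale_one]
  have sB3 : slice 0 0 0 (linSub ![1,-1,1,0] f) = f := by
    rw [slice_linSub]
    norm_num [Nat.factorial, PowerSeries.rescale_one, Dn_zero]
  have sC0 : slice 0 1 0 (linSub ![1,0,1,1] f) = Dn 1 f := by
    rw [slice_linSub]
    norm_num [Matrix.cons_val_two, Matrix.cons_val_three, Nat.factorial, PowerSeries.rescale_one]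
  have sC1 : slice 0 1 1 (linSub ![1,0,1,1] f) = Dn 2 f := by
    rw [slice_linSub]
    norm_num [Matrix.cons_val_two, Matrix.cons_val_three, Nat.factorial, PowerSeries.rescale_one]
  have sC2 : slice 0 1 2 (linSub ![1,0,1,1] f) = PowerSeries.C 2⁻¹ * Dn 3 f := by
    rw [slice_linSub]
    norm_num [Matrix.cons_val_two, Matrix.cons_val_three, Nat.factorial, PowerSeries.rescale_one]
  have t0 : slice 1 0 0 (linSub ![-1,1,0,1] f) = Dn 1 f := by
    rw [slice_linSub]
    norm_num [Nat.factorial]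
    rw [show ((-1 : ℂ)) = (-1 : ℂ) from rfl, rescale_neg_Dn hodd]
    norm_num
  have t1 : slice 1 0 1 (linSub ![-1,1,0,1] f) = -Dn 2 f := by
    rw [slice_linSub]
    norm_num [Matrix.cons_val_two, Matrix.cons_val_three, Nat.factorial]
    rw [rescale_neg_Dn hodd]
    norm_num
  have t2 : slice 1 0 2 (linSub ![-1,1,0,1] f) = PowerSeries.C 2⁻¹ * Dn 3 f := by
    rw [slice_linSub]
    norm_num [Matrix.cons_val_two, Matrix.cons_val_three, Nat.factorial]
    rw [rescale_C, rescale_neg_Dn hodd]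
    norm_num
  ------------------------------------------------------------------
  -- convolution slices of x-carrying pairs
  ------------------------------------------------------------------
  have convA : slice 2 2 0 (linSub ![1,-1,0,0] f * linSub ![1,0,1,0] f)
      = (PowerSeries.C 2⁻¹ * Dn 2 f) * (PowerSeries.C 2⁻¹ * Dn 2 f) := by
    rw [slice_mul_conv 2 0 0 2 2 2 0 rfl rfl ?_]
    · rw [Finset.Nat.antidiagonal_zero, Finset.sum_singleton, sA1, sA2]
    · intro n u v huv hu hv
      have hu2 : u 2 = 0 := supp_of hu 2 (by simp)
      have hv1 : v 1 = 0 := supp_of hv 1 (by simp)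
      have hc1 : u 1 + v 1 = 2 := by simpa using add_coords huv 1
      exact ⟨by omega, hu2⟩
  have convB : slice 2 2 0 (linSub ![1,0,0,0] f * linSub ![1,-1,1,0] f)
      = f * (PowerSeries.C 4⁻¹ * Dn 4 f) := by
    rw [slice_mul_conv 0 0 2 2 2 2 0 rfl rfl ?_]
    · rw [Finset.Nat.antidiagonal_zero, Finset.sum_singleton, sB1, sB2]
    · intro n u v huv hu hv
      exact ⟨supp_of hu 1 (by simp), supp_of hu 2 (by simp)⟩
  have convB0 : slice 0 0 0 (linSub ![1,0,0,0] f * linSub ![1,-1,1,0] f) = f * f := by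
    rw [slice_mul_conv 0 0 0 0 0 0 0 rfl rfl ?_]
    · rw [Finset.Nat.antidiagonal_zero, Finset.sum_singleton, sB1, sB3]
    · intro n u v huv hu hv
      exact ⟨supp_of hu 1 (by simp), supp_of hu 2 (by simp)⟩
  have convC : slice 1 1 2 (linSub ![1,0,1,1] f * linSub ![-1,1,0,1] f)
      = Dn 1 f * (PowerSeries.C 2⁻¹ * Dn 3 f) + Dn 2 f * -Dn 2 f
        + (PowerSeries.C 2⁻¹ * Dn 3 f) * Dn 1 f := by
    rw [slice_mul_conv 0 1 1 0 1 1 2 rfl rfl ?_]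
    · rw [Finset.Nat.sum_antidiagonal_eq_sum_range_succ_mk]
      rw [Finset.sum_range_succ, Finset.sum_range_succ, Finset.sum_range_succ,
        Finset.sum_range_zero]
      norm_num
      rw [sC0, sC1, sC2, t0, t1, t2]
      ring
    · intro n u v huv hu hv
      have hu1 : u 1 = 0 := supp_of hu 1 (by simp)
      have hv2 : v 2 = 0 := supp_of hv 2 (by simp)
      have hc2 : u 2 + v 2 = 1 := by simpa using add_coords huv 2
      exact ⟨hu1, by omega⟩
  ------------------------------------------------------------------
  -- the three products
  ------------------------------------------------------------------
  have hA : slice 2 2 2 (linSub ![0,0,1,1] f * linSub ![1,-1,0,0] f * linSub ![1,0,1,0] f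
        * linSub ![0,1,0,1] f)
      = PowerSeries.C 1 * ((PowerSeries.C 2⁻¹ * Dn 2 f) * (PowerSeries.C 2⁻¹ * Dn 2 f)) := by
    have hre : linSub ![0,0,1,1] f * linSub ![1,-1,0,0] f * linSub ![1,0,1,0] f
        * linSub ![0,1,0,1] f
        = (linSub ![0,0,1,1] f * linSub ![0,1,0,1] f)
          * (linSub ![1,-1,0,0] f * linSub ![1,0,1,0] f) := by ring
    rw [hre, slice_mul_left 0 0 2 2 2 0 2 2 2 rfl rfl rfl ?_, w1, convA]
    intro n u v huv hu hv
    obtain ⟨w, z, hwz, hw, hz⟩ := exists_split hu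
    obtain ⟨w', z', hwz', hw', hz'⟩ := exists_split hv
    have hw0 : w 0 = 0 := supp_of hw 0 (by simp)
    have hw1 : w 1 = 0 := supp_of hw 1 (by simp)
    have hz0 : z 0 = 0 := supp_of hz 0 (by simp)
    have hz2 : z 2 = 0 := supp_of hz 2 (by simp)
    have hw'2 : w' 2 = 0 := supp_of hw' 2 (by simp)
    have hw'3 : w' 3 = 0 := supp_of hw' 3 (by simp)
    have hz'1 : z' 1 = 0 := supp_of hz' 1 (by simp)
    have hz'3 : z' 3 = 0 := supp_of hz' 3 (by simp)
    obtain ⟨hws, hws3⟩ := hshape _ _ hw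
    obtain ⟨hzs, hzs3⟩ := hshape _ _ hz
    have hd0 := add_coords hwz 0; have hd1 := add_coords hwz 1
    have hd2 := add_coords hwz 2; have hd3 := add_coords hwz 3
    have he0 := add_coords hwz' 0; have he1 := add_coords hwz' 1
    have he2 := add_coords hwz' 2; have he3 := add_coords hwz' 3
    have hc0 : u 0 + v 0 = n := by simpa using add_coords huv 0
    have hc1 : u 1 + v 1 = 2 := by simpa using add_coords huv 1
    have hc2 : u 2 + v 2 = 2 := by simpa using add_coords huv 2
    have hc3 : u 3 + v 3 = 2 := by simpa using add_coords huv 3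
    apply eq_e_of <;> omega
  have hB : slice 2 2 2 (linSub ![0,0,0,1] f * linSub ![1,0,0,0] f * linSub ![1,-1,1,0] f
        * linSub ![0,1,1,1] f)
      = PowerSeries.C 1 * (f * (PowerSeries.C 4⁻¹ * Dn 4 f))
        + PowerSeries.C (30 * PowerSeries.coeff 5 f) * (f * f) := by
    have hre : linSub ![0,0,0,1] f * linSub ![1,0,0,0] f * linSub ![1,-1,1,0] f
        * linSub ![0,1,1,1] f
        = (linSub ![0,0,0,1] f * linSub ![0,1,1,1] f)
          * (linSub ![1,0,0,0] f * linSub ![1,-1,1,0] f) := by ring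
    rw [hre, slice_mul_left_two 0 0 2 2 2 0 2 2 2 0 0 0 2 2 2 rfl rfl rfl rfl rfl rfl ?_ ?_,
      w2, w3, convB, convB0]
    · intro hcon
      have := DFunLike.congr_fun hcon 1
      simp at this
    · intro n u v huv hu hv
      obtain ⟨w, z, hwz, hw, hz⟩ := exists_split hu
      obtain ⟨w', z', hwz', hw', hz'⟩ := exists_split hv
      have hw0 : w 0 = 0 := supp_of hw 0 (by simp)
      have hw1 : w 1 = 0 := supp_of hw 1 (by simp)
      have hw2 : w 2 = 0 := supp_of hw 2 (by simp)
      have hz0 : z 0 = 0 := supp_of hz 0 (by simp)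
      have hw'1 : w' 1 = 0 := supp_of hw' 1 (by simp)
      have hw'2 : w' 2 = 0 := supp_of hw' 2 (by simp)
      have hw'3 : w' 3 = 0 := supp_of hw' 3 (by simp)
      have hz'3 : z' 3 = 0 := supp_of hz' 3 (by simp)
      obtain ⟨hws, hws3⟩ := hshape _ _ hw
      obtain ⟨hzs, hzs3⟩ := hshape _ _ hz
      have hd0 := add_coords hwz 0; have hd1 := add_coords hwz 1
      have hd2 := add_coords hwz 2; have hd3 := add_coords hwz 3
      have he0 := add_coords hwz' 0; have he1 := add_coords hwz' 1
      have he2 := add_coords hwz' 2; have he3 := add_coords hwz' 3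
      have hc0 : u 0 + v 0 = n := by simpa using add_coords huv 0
      have hc1 : u 1 + v 1 = 2 := by simpa using add_coords huv 1
      have hc2 : u 2 + v 2 = 2 := by simpa using add_coords huv 2
      have hc3 : u 3 + v 3 = 2 := by simpa using add_coords huv 3
      have hdis : (u 1 = 0 ∧ u 2 = 0) ∨ (u 1 = 2 ∧ u 2 = 2) := by omega
      rcases hdis with ⟨ha, hb⟩ | ⟨ha, hb⟩
      · left; apply eq_e_of <;> omega
      · right; apply eq_e_of <;> omega
  have hC : slice 2 2 2 (linSub ![0,0,1,0] f * linSub ![0,1,0,0] f * linSub ![1,0,1,1] f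
        * linSub ![-1,1,0,1] f)
      = PowerSeries.C 1 * (Dn 1 f * (PowerSeries.C 2⁻¹ * Dn 3 f) + Dn 2 f * -Dn 2 f
          + (PowerSeries.C 2⁻¹ * Dn 3 f) * Dn 1 f) := by
    have hre : linSub ![0,0,1,0] f * linSub ![0,1,0,0] f * linSub ![1,0,1,1] f
        * linSub ![-1,1,0,1] f
        = (linSub ![0,0,1,0] f * linSub ![0,1,0,0] f)
          * (linSub ![1,0,1,1] f * linSub ![-1,1,0,1] f) := by ring
    rw [hre, slice_mul_left 1 1 0 1 1 2 2 2 2 rfl rfl rfl ?_, w4, convC]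
    intro n u v huv hu hv
    obtain ⟨w, z, hwz, hw, hz⟩ := exists_split hu
    have hw0 : w 0 = 0 := supp_of hw 0 (by simp)
    have hw1 : w 1 = 0 := supp_of hw 1 (by simp)
    have hw3 : w 3 = 0 := supp_of hw 3 (by simp)
    have hz0 : z 0 = 0 := supp_of hz 0 (by simp)
    have hz2 : z 2 = 0 := supp_of hz 2 (by simp)
    have hz3 : z 3 = 0 := supp_of hz 3 (by simp)
    obtain ⟨hws, hws3⟩ := hshape _ _ hw
    obtain ⟨hzs, hzs3⟩ := hshape _ _ hz
    have hd0 := add_coords hwz 0; have hd1 := add_coords hwz 1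
    have hd2 := add_coords hwz 2; have hd3 := add_coords hwz 3
    have hc1 : u 1 + v 1 = 2 := by simpa using add_coords huv 1
    have hc2 : u 2 + v 2 = 2 := by simpa using add_coords huv 2
    apply eq_e_of <;> omega
  ------------------------------------------------------------------
  -- assemble
  ------------------------------------------------------------------
  have hsplit : slice 2 2 2
        (linSub ![0,0,1,1] f * linSub ![1,-1,0,0] f * linSub ![1,0,1,0] f * linSub ![0,1,0,1] f
          - linSub ![0,0,0,1] f * linSub ![1,0,0,0] f * linSub ![1,-1,1,0] f * linSub ![0,1,1,1] f
          + linSub ![0,0,1,0] f * linSub ![0,1,0,0] f * linSub ![1,0,1,1] f * linSub ![-1,1,0,1] f)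
      = slice 2 2 2 (linSub ![0,0,1,1] f * linSub ![1,-1,0,0] f * linSub ![1,0,1,0] f
          * linSub ![0,1,0,1] f)
        - slice 2 2 2 (linSub ![0,0,0,1] f * linSub ![1,0,0,0] f * linSub ![1,-1,1,0] f
          * linSub ![0,1,1,1] f)
        + slice 2 2 2 (linSub ![0,0,1,0] f * linSub ![0,1,0,0] f * linSub ![1,0,1,1] f
          * linSub ![-1,1,0,1] f) := by
    ext n
    simp [map_add, map_sub]
  have hz : PowerSeries.C 1 * ((PowerSeries.C 2⁻¹ * Dn 2 f) * (PowerSeries.C 2⁻¹ * Dn 2 f))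
      - (PowerSeries.C 1 * (f * (PowerSeries.C 4⁻¹ * Dn 4 f))
        + PowerSeries.C (30 * PowerSeries.coeff 5 f) * (f * f))
      + PowerSeries.C 1 * (Dn 1 f * (PowerSeries.C 2⁻¹ * Dn 3 f) + Dn 2 f * -Dn 2 f
          + (PowerSeries.C 2⁻¹ * Dn 3 f) * Dn 1 f) = 0 := by
    rw [← hA, ← hB, ← hC, ← hsplit, hrel]
    ext n
    simp
  rw [map_one, one_mul, one_mul, one_mul] at hz
  have h2C : (2 : PowerSeries ℂ) = PowerSeries.C 2 := (map_ofNat _ 2).symm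
  have h4C : (4 : PowerSeries ℂ) = PowerSeries.C 4 := (map_ofNat _ 4).symm
  have c1 : (2 : PowerSeries ℂ) * PowerSeries.C 2⁻¹ = 1 := by
    rw [h2C, ← map_mul, show (2 : ℂ) * 2⁻¹ = 1 by norm_num, map_one]
  have c2 : (4 : PowerSeries ℂ) * PowerSeries.C 4⁻¹ = 1 := by
    rw [h4C, ← map_mul, show (4 : ℂ) * 4⁻¹ = 1 by norm_num, map_one]
  have c3 : PowerSeries.C (120 * PowerSeries.coeff 5 f)
      = 4 * PowerSeries.C (30 * PowerSeries.coeff 5 f) := by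
    rw [h4C, ← map_mul]
    congr 1
    ring
  linear_combination (-4 : PowerSeries ℂ) * hz
    + ((2 * PowerSeries.C 2⁻¹ + 1) * Dn 2 f ^ 2 + 4 * Dn 1 f * Dn 3 f) * c1
    - (f * Dn 4 f) * c2 + f ^ 2 * c3
end

section
/- Suppose f(x) = x·exp(Σ_{i≥2} a_{2i} x^{2i}) is an odd formal power series over ℂ satisfying 3f''(x)² - 4f'(x)f⁽³⁾(x) + f(x)f⁽⁴⁾(x) + f(x)²f⁽⁵⁾(0) = 0. Then the coefficients a_{2k} for k ≥ 4 are determined as polynomials in a₄ and a₆; in particular a₈ = -(6/7)a₄², a₁₀ = -(12/11)a₄a₆, and a₁₂ = (3/143)(32a₄³ - 25a₆²). -/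
open Finset MvPolynomial PowerSeries

abbrev MQ : Type := MvPolynomial (Fin 2) ℚ

/-- coefficient accessor shift: q t = p (t-1) for t ≥ 1, q 0 = 0 -/
noncomputable def qc (p : ℕ → MQ) : ℕ → MQ := fun t => if t = 0 then 0 else p (t-1)

noncomputable def peBody (p : ℕ → MQ) (n : ℕ) : MQ :=
  if n = 0 then 1
  else if n = 4 then MvPolynomial.X 0
  else if n = 6 then MvPolynomial.X 1
  else if 8 ≤ n ∧ Even n then
    MvPolynomial.C (-((((n:ℚ)-2)-4)*(((n:ℚ)-2)+1)*(((n:ℚ)-2)+2)*(((n:ℚ)-2)+3))⁻¹) *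
    ( (3 : MQ) * (∑ ij ∈ antidiagonal (n-2),
        MvPolynomial.C (((ij.1:ℚ)+1)*((ij.1:ℚ)+2)*((ij.2:ℚ)+1)*((ij.2:ℚ)+2)) * (qc p (ij.1+2) * qc p (ij.2+2)))
      - 4 * (∑ ij ∈ (antidiagonal (n-2)).erase (0, n-2),
        MvPolynomial.C (((ij.1:ℚ)+1)*((ij.2:ℚ)+1)*((ij.2:ℚ)+2)*((ij.2:ℚ)+3)) * (qc p (ij.1+1) * qc p (ij.2+3)))
      + (∑ ij ∈ ((antidiagonal (n-2)).erase (1, n-3)).erase (0, n-2),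
        MvPolynomial.C (((ij.2:ℚ)+1)*((ij.2:ℚ)+2)*((ij.2:ℚ)+3)*((ij.2:ℚ)+4)) * (qc p ij.1 * qc p (ij.2+4)))
      + 120 * qc p 5 * (∑ ij ∈ antidiagonal (n-2), qc p ij.1 * qc p ij.2) )
  else 0

theorem peBody_congr (p q : ℕ → MQ) (n : ℕ) (h : ∀ m, m < n → p m = q m) :
    peBody p n = peBody q n := by
  have hq : ∀ t, 0 < t → t ≤ n → qc p t = qc q t := by
    intro t ht htn
    have : t ≠ 0 := ht.ne'
    simp only [qc, if_neg this]
    exact h _ (by omega)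
  unfold peBody
  split_ifs with h0 h4 h6 h8
  · rfl
  · rfl
  · rfl
  · have hn8 : 8 ≤ n := h8.1
    refine congrArg (MvPolynomial.C _ * ·) ?_
    have hS1 : ∀ ij ∈ antidiagonal (n-2),
        MvPolynomial.C (((ij.1:ℚ)+1)*((ij.1:ℚ)+2)*((ij.2:ℚ)+1)*((ij.2:ℚ)+2)) * (qc p (ij.1+2) * qc p (ij.2+2))
        = MvPolynomial.C (((ij.1:ℚ)+1)*((ij.1:ℚ)+2)*((ij.2:ℚ)+1)*((ij.2:ℚ)+2)) * (qc q (ij.1+2) * qc q (ij.2+2)) := by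
      intro ij hij
      rw [HasAntidiagonal.mem_antidiagonal] at hij
      rw [hq _ (by omega) (by omega), hq (ij.2+2) (by omega) (by omega)]
    have hS2 : ∀ ij ∈ (antidiagonal (n-2)).erase (0, n-2),
        MvPolynomial.C (((ij.1:ℚ)+1)*((ij.2:ℚ)+1)*((ij.2:ℚ)+2)*((ij.2:ℚ)+3)) * (qc p (ij.1+1) * qc p (ij.2+3))
        = MvPolynomial.C (((ij.1:ℚ)+1)*((ij.2:ℚ)+1)*((ij.2:ℚ)+2)*((ij.2:ℚ)+3)) * (qc q (ij.1+1) * qc q (ij.2+3)) := by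
      intro ij hij
      obtain ⟨hne, hij⟩ := mem_erase.mp hij
      rw [HasAntidiagonal.mem_antidiagonal] at hij
      have h2 : ij.2 + 2 ≤ n - 1 := by
        rcases Nat.lt_or_ge ij.2 (n-2) with h | h
        · omega
        · exfalso; apply hne
          have : ij.2 = n - 2 := by omega
          have : ij.1 = 0 := by omega
          exact Prod.ext this ‹ij.2 = n-2›
      rw [hq _ (by omega) (by omega), hq (ij.2+3) (by omega) (by omega)]
    have hS3 : ∀ ij ∈ ((antidiagonal (n-2)).erase (1, n-3)).erase (0, n-2),
        MvPolynomial.C (((ij.2:ℚ)+1)*((ij.2:ℚ)+2)*((ij.2:ℚ)+3)*((ij.2:ℚ)+4)) * (qc p ij.1 * qc p (ij.2+4))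
        = MvPolynomial.C (((ij.2:ℚ)+1)*((ij.2:ℚ)+2)*((ij.2:ℚ)+3)*((ij.2:ℚ)+4)) * (qc q ij.1 * qc q (ij.2+4)) := by
      intro ij hij
      obtain ⟨hne0, hij⟩ := mem_erase.mp hij
      obtain ⟨hne1, hij⟩ := mem_erase.mp hij
      rw [HasAntidiagonal.mem_antidiagonal] at hij
      have h2 : ij.2 ≤ n - 4 := by
        rcases Nat.lt_or_ge ij.2 (n-3) with h | h
        · omega
        · exfalso
          rcases Nat.eq_or_lt_of_le h with h' | h'
          · apply hne1
            have h1 : ij.2 = n - 3 := h'.symm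
            have : ij.1 = 1 := by omega
            exact Prod.ext this h1
          · apply hne0
            have h1 : ij.2 = n - 2 := by omega
            have : ij.1 = 0 := by omega
            exact Prod.ext this h1
      rcases Nat.eq_zero_or_pos ij.1 with h1 | h1
      · simp [qc, h1]
      · rw [hq _ h1 (by omega), hq (ij.2+4) (by omega) (by omega)]
    have hS4 : ∀ ij ∈ antidiagonal (n-2),
        qc p ij.1 * qc p ij.2 = qc q ij.1 * qc q ij.2 := by
      intro ij hij
      rw [HasAntidiagonal.mem_antidiagonal] at hij
      rcases Nat.eq_zero_or_pos ij.1 with h1 | h1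
      · simp [qc, h1]
      rcases Nat.eq_zero_or_pos ij.2 with h2 | h2
      · simp [qc, h2]
      rw [hq _ h1 (by omega), hq ij.2 h2 (by omega)]
    rw [sum_congr rfl hS1, sum_congr rfl hS2, sum_congr rfl hS3, sum_congr rfl hS4,
      hq 5 (by omega) (by omega)]
  · rfl

noncomputable def peA : ℕ → ℕ → MQ
  | 0, _ => 0
  | (F+1), n => peBody (peA F) n

noncomputable def PE (n : ℕ) : MQ := peA (n+1) n

theorem peA_stable : ∀ n F G : ℕ, n < F → n < G → peA F n = peA G n := by
  intro n
  induction n using Nat.strong_induction_on with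
  | _ n ih =>
    intro F G hF hG
    obtain ⟨F', rfl⟩ : ∃ F', F = F' + 1 := ⟨F - 1, by omega⟩
    obtain ⟨G', rfl⟩ : ∃ G', G = G' + 1 := ⟨G - 1, by omega⟩
    show peBody (peA F') n = peBody (peA G') n
    exact peBody_congr _ _ _ fun m hm => ih m hm F' G' (by omega) (by omega)

theorem PE_eq (n : ℕ) : PE n = peBody PE n := by
  show peBody (peA n) n = peBody PE n
  exact peBody_congr _ _ _ fun m hm => peA_stable m n (m+1) (by omega) (by omega)

theorem PE_zero : PE 0 = 1 := by rw [PE_eq]; rfl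
theorem PE_four : PE 4 = MvPolynomial.X 0 := by rw [PE_eq]; rfl
theorem PE_six : PE 6 = MvPolynomial.X 1 := by rw [PE_eq]; rfl
theorem PE_of_ne (n : ℕ) (h0 : n ≠ 0) (h4 : n ≠ 4) (h6 : n ≠ 6) (h8 : ¬ (8 ≤ n ∧ Even n)) :
    PE n = 0 := by
  rw [PE_eq, peBody, if_neg h0, if_neg h4, if_neg h6, if_neg h8]
theorem PE_odd (n : ℕ) (h : ¬ Even n) : PE n = 0 :=
  PE_of_ne n (by rintro rfl; simp at h) (by rintro rfl; exact h (by decide))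
    (by rintro rfl; exact h (by decide)) (by tauto)
theorem PE_two : PE 2 = 0 := PE_of_ne 2 (by norm_num) (by norm_num) (by norm_num) (by omega)

noncomputable def paBody (p : ℕ → MQ) (n : ℕ) : MQ :=
  if 4 ≤ n ∧ Even n then
    PE n - MvPolynomial.C ((n:ℚ)⁻¹) * ∑ ij ∈ (antidiagonal (n-1)).erase (n-1, 0),
      MvPolynomial.C ((ij.1:ℚ)+1) * (if 4 ≤ ij.1+1 ∧ Even (ij.1+1) then p (ij.1+1) else 0) * PE ij.2
  else 0

theorem paBody_congr (p q : ℕ → MQ) (n : ℕ) (h : ∀ m, m < n → p m = q m) :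
    paBody p n = paBody q n := by
  unfold paBody
  split_ifs with hc
  · congr 1
    congr 1
    apply sum_congr rfl
    intro ij hij
    obtain ⟨hne, hij⟩ := mem_erase.mp hij
    rw [HasAntidiagonal.mem_antidiagonal] at hij
    have h1 : ij.1 ≤ n - 2 := by
      rcases Nat.lt_or_ge ij.1 (n-1) with h' | h'
      · omega
      · exfalso; apply hne
        have h2 : ij.1 = n - 1 := by omega
        have h3 : ij.2 = 0 := by omega
        exact Prod.ext h2 h3
    rw [h (ij.1+1) (by omega)]
  · rfl

noncomputable def paA : ℕ → ℕ → MQ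
  | 0, _ => 0
  | (F+1), n => paBody (paA F) n

noncomputable def PA (n : ℕ) : MQ := paA (n+1) n

theorem paA_stable : ∀ n F G : ℕ, n < F → n < G → paA F n = paA G n := by
  intro n
  induction n using Nat.strong_induction_on with
  | _ n ih =>
    intro F G hF hG
    obtain ⟨F', rfl⟩ : ∃ F', F = F' + 1 := ⟨F - 1, by omega⟩
    obtain ⟨G', rfl⟩ : ∃ G', G = G' + 1 := ⟨G - 1, by omega⟩
    show paBody (paA F') n = paBody (paA G') n
    exact paBody_congr _ _ _ fun m hm => ih m hm F' G' (by omega) (by omega)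

theorem PA_eq (n : ℕ) : PA n = paBody PA n := by
  show paBody (paA n) n = paBody PA n
  exact paBody_congr _ _ _ fun m hm => paA_stable m n (m+1) (by omega) (by omega)



theorem Dn_one (f : PowerSeries ℂ) : Dn 1 f = derivativeFun f := rfl
theorem Dn_two (f : PowerSeries ℂ) : Dn 2 f = derivativeFun (derivativeFun f) := rfl
theorem Dn_three (f : PowerSeries ℂ) : Dn 3 f = derivativeFun (derivativeFun (derivativeFun f)) := rfl
theorem Dn_four (f : PowerSeries ℂ) :
    Dn 4 f = derivativeFun (derivativeFun (derivativeFun (derivativeFun f))) := rfl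

theorem coeff_derivativeFun_port (f : PowerSeries ℂ) (n : ℕ) :
    coeff n (derivativeFun f) = coeff (n+1) f * (n+1) := by
  rw [show derivativeFun f = PowerSeries.derivative ℂ f from rfl, PowerSeries.coeff_derivative]

theorem coeff_Dn1 (f : PowerSeries ℂ) (n : ℕ) :
    coeff n (Dn 1 f) = ((n:ℂ)+1) * coeff (n+1) f := by
  rw [Dn_one, coeff_derivativeFun_port]; ring
theorem coeff_Dn2 (f : PowerSeries ℂ) (n : ℕ) :
    coeff n (Dn 2 f) = ((n:ℂ)+1) * ((n:ℂ)+2) * coeff (n+2) f := by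
  rw [Dn_two, coeff_derivativeFun_port, coeff_derivativeFun_port]
  push_cast; ring_nf
theorem coeff_Dn3 (f : PowerSeries ℂ) (n : ℕ) :
    coeff n (Dn 3 f) = ((n:ℂ)+1) * ((n:ℂ)+2) * ((n:ℂ)+3) * coeff (n+3) f := by
  rw [Dn_three, coeff_derivativeFun_port, coeff_derivativeFun_port, coeff_derivativeFun_port]
  push_cast; ring_nf
theorem coeff_Dn4 (f : PowerSeries ℂ) (n : ℕ) :
    coeff n (Dn 4 f) = ((n:ℂ)+1) * ((n:ℂ)+2) * ((n:ℂ)+3) * ((n:ℂ)+4) * coeff (n+4) f := by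
  rw [Dn_four, coeff_derivativeFun_port, coeff_derivativeFun_port, coeff_derivativeFun_port, coeff_derivativeFun_port]
  push_cast; ring_nf

section Main
variable (a : ℕ → ℂ) (f E : PowerSeries ℂ)

/-- E-recursion from the ODE -/
theorem R1 (hE' : PowerSeries.derivativeFun E =
      PowerSeries.derivativeFun
        (PowerSeries.mk fun n => if 4 ≤ n ∧ Even n then a n else 0) * E) (m : ℕ) :
    ((m:ℂ)+1) * coeff (m+1) E
      = ∑ ij ∈ antidiagonal m,
          ((ij.1:ℂ)+1) * (if 4 ≤ ij.1+1 ∧ Even (ij.1+1) then a (ij.1+1) else 0)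
            * coeff ij.2 E := by
  have h := congrArg (coeff m) hE'
  rw [coeff_derivativeFun_port, PowerSeries.coeff_mul] at h
  rw [mul_comm, h]
  apply sum_congr rfl
  intro ij _
  rw [coeff_derivativeFun_port, PowerSeries.coeff_mk]
  ring

/-- G-coefficient identity -/
theorem coeffG
    (hG : 3 * (Dn 2 f) ^ 2 - 4 * Dn 1 f * Dn 3 f + f * Dn 4 f
          + PowerSeries.C (120 * PowerSeries.coeff 5 f) * f ^ 2 = 0) (d : ℕ) :
    3 * (∑ ij ∈ antidiagonal d,
        ((ij.1:ℂ)+1)*((ij.1:ℂ)+2)*((ij.2:ℂ)+1)*((ij.2:ℂ)+2) * (coeff (ij.1+2) f * coeff (ij.2+2) f))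
    - 4 * (∑ ij ∈ antidiagonal d,
        ((ij.1:ℂ)+1)*((ij.2:ℂ)+1)*((ij.2:ℂ)+2)*((ij.2:ℂ)+3) * (coeff (ij.1+1) f * coeff (ij.2+3) f))
    + (∑ ij ∈ antidiagonal d,
        ((ij.2:ℂ)+1)*((ij.2:ℂ)+2)*((ij.2:ℂ)+3)*((ij.2:ℂ)+4) * (coeff ij.1 f * coeff (ij.2+4) f))
    + 120 * coeff 5 f * (∑ ij ∈ antidiagonal d, coeff ij.1 f * coeff ij.2 f) = 0 := by
  have h := congrArg (coeff d) hG
  rw [map_zero] at h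
  rw [show (3 : PowerSeries ℂ) = PowerSeries.C 3 from (map_ofNat _ 3).symm,
      show (4 : PowerSeries ℂ) = PowerSeries.C 4 from (map_ofNat _ 4).symm] at h
  rw [sq, sq, mul_assoc] at h
  rw [map_add, map_add, map_sub, PowerSeries.coeff_C_mul, PowerSeries.coeff_C_mul, PowerSeries.coeff_C_mul,
    PowerSeries.coeff_mul, PowerSeries.coeff_mul, PowerSeries.coeff_mul, PowerSeries.coeff_mul] at h
  have hA : ∑ ij ∈ antidiagonal d,
      ((ij.1:ℂ)+1)*((ij.1:ℂ)+2)*((ij.2:ℂ)+1)*((ij.2:ℂ)+2) * (coeff (ij.1+2) f * coeff (ij.2+2) f)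
      = ∑ p ∈ antidiagonal d, coeff p.1 (Dn 2 f) * coeff p.2 (Dn 2 f) := by
    apply sum_congr rfl; intro ij _; rw [coeff_Dn2, coeff_Dn2]; ring
  have hB : ∑ ij ∈ antidiagonal d,
      ((ij.1:ℂ)+1)*((ij.2:ℂ)+1)*((ij.2:ℂ)+2)*((ij.2:ℂ)+3) * (coeff (ij.1+1) f * coeff (ij.2+3) f)
      = ∑ p ∈ antidiagonal d, coeff p.1 (Dn 1 f) * coeff p.2 (Dn 3 f) := by
    apply sum_congr rfl; intro ij _; rw [coeff_Dn1, coeff_Dn3]; ring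
  have hC : ∑ ij ∈ antidiagonal d,
      ((ij.2:ℂ)+1)*((ij.2:ℂ)+2)*((ij.2:ℂ)+3)*((ij.2:ℂ)+4) * (coeff ij.1 f * coeff (ij.2+4) f)
      = ∑ p ∈ antidiagonal d, coeff p.1 f * coeff p.2 (Dn 4 f) := by
    apply sum_congr rfl; intro ij _; rw [coeff_Dn4]; ring
  rw [hA, hB, hC]
  exact h

end Main
section Key
variable (a : ℕ → ℂ) (f E : PowerSeries ℂ)

theorem key (hE1 : PowerSeries.constantCoeff E = 1)
    (hE' : PowerSeries.derivativeFun E =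
      PowerSeries.derivativeFun
        (PowerSeries.mk fun n => if 4 ≤ n ∧ Even n then a n else 0) * E)
    (hf : f = PowerSeries.X * E)
    (hG : 3 * (Dn 2 f) ^ 2 - 4 * Dn 1 f * Dn 3 f + f * Dn 4 f
          + PowerSeries.C (120 * PowerSeries.coeff 5 f) * f ^ 2 = 0) :
    ∀ n, PowerSeries.coeff n E = MvPolynomial.aeval ![a 4, a 6] (PE n) := by
  have hcf0 : PowerSeries.coeff 0 f = 0 := by rw [hf]; simp
  have hcfs : ∀ t, PowerSeries.coeff (t+1) f = PowerSeries.coeff t E := by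
    intro t; rw [hf]; exact coeff_succ_X_mul t E
  have he0 : PowerSeries.coeff 0 E = 1 := by
    rw [PowerSeries.coeff_zero_eq_constantCoeff]; exact hE1
  intro n
  induction n using Nat.strong_induction_on with
  | _ n ih =>
    match n, ih with
    | 0, _ => simpa [PE_zero] using he0
    | (m+1), ih =>
      have hrec := R1 a E hE' m
      by_cases hev : Even (m+1)
      case neg =>
        -- odd case
        rw [PE_odd _ hev, map_zero]
        have hsum : ∑ ij ∈ antidiagonal m,
            ((ij.1:ℂ)+1) * (if 4 ≤ ij.1+1 ∧ Even (ij.1+1) then a (ij.1+1) else 0)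
              * PowerSeries.coeff ij.2 E = 0 := by
          apply sum_eq_zero
          intro ij hij
          rw [HasAntidiagonal.mem_antidiagonal] at hij
          by_cases hc : 4 ≤ ij.1+1 ∧ Even (ij.1+1)
          · have hodd : ¬ Even ij.2 := by
              rcases hc.2 with ⟨r, hr⟩
              rcases Nat.even_or_odd ij.2 with h2 | h2
              · exfalso; apply hev
                rcases h2 with ⟨s, hs⟩
                exact ⟨r + s, by omega⟩
              · exact Nat.not_even_iff_odd.mpr h2
            rw [ih ij.2 (by omega), PE_odd _ hodd, map_zero, mul_zero]
          · rw [if_neg hc, mul_zero, zero_mul]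
        rw [hsum] at hrec
        have hm : ((m:ℂ)+1) ≠ 0 := by
          have : ((m+1:ℕ):ℂ) ≠ 0 := Nat.cast_ne_zero.mpr (by omega)
          push_cast at this; exact this
        exact (mul_eq_zero.mp hrec).resolve_left hm
      case pos =>
        rcases Nat.lt_or_ge (m+1) 8 with hlt | hge
        · -- small cases : m+1 ∈ {2,4,6}
          have hm6 : m ≤ 6 := by omega
          interval_cases m
          · -- m = 0 : impossible, m+1 = 1 odd
            exact absurd hev (by decide)
          · -- m+1 = 2
            rw [PE_two, map_zero]
            show PowerSeries.coeff 2 E = 0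
            rw [Finset.Nat.sum_antidiagonal_eq_sum_range_succ_mk] at hrec
            simp [Finset.sum_range_succ, Nat.even_iff] at hrec
            norm_num at hrec
            exact hrec
          · exact absurd hev (by decide)
          · -- m+1 = 4
            rw [PE_four]
            show PowerSeries.coeff 4 E = _
            rw [Finset.Nat.sum_antidiagonal_eq_sum_range_succ_mk] at hrec
            simp [Finset.sum_range_succ, he0, Nat.even_iff] at hrec
            norm_num at hrec
            simp [MvPolynomial.aeval_X]
            linear_combination hrec
          · exact absurd hev (by decide)
          · -- m+1 = 6
            rw [PE_six]
            show PowerSeries.coeff 6 E = _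
            have he2 : PowerSeries.coeff 2 E = 0 := by
              rw [ih 2 (by omega), PE_two, map_zero]
            rw [Finset.Nat.sum_antidiagonal_eq_sum_range_succ_mk] at hrec
            simp [Finset.sum_range_succ, he0, he2, Nat.even_iff] at hrec
            norm_num at hrec
            simp [MvPolynomial.aeval_X]
            linear_combination hrec
          · exact absurd hev (by decide)
        · -- main case : n = m+1 = d+2, d = j+6
          obtain ⟨j, rfl⟩ : ∃ j, m = j + 7 := ⟨m - 7, by omega⟩
          have hg := coeffG f hG (j+6)
          have hcf1 : PowerSeries.coeff 1 f = 1 := by rw [hcfs 0, he0]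
          have h0d : ((0:ℕ), j+6) ∈ antidiagonal (j+6) := by simp
          have h1d : ((1:ℕ), j+5) ∈ antidiagonal (j+6) := by
            rw [HasAntidiagonal.mem_antidiagonal]; omega
          have h0d' : ((0:ℕ), j+6) ∈ (antidiagonal (j+6)).erase (1, j+5) := by
            rw [mem_erase, HasAntidiagonal.mem_antidiagonal]
            exact ⟨by simp, by omega⟩
          rw [← Finset.add_sum_erase (antidiagonal (j+6))
              (fun ij => ((ij.1:ℂ)+1)*((ij.2:ℂ)+1)*((ij.2:ℂ)+2)*((ij.2:ℂ)+3)
                * (PowerSeries.coeff (ij.1+1) f * PowerSeries.coeff (ij.2+3) f)) h0d,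
             ← Finset.add_sum_erase (antidiagonal (j+6))
              (fun ij => ((ij.2:ℂ)+1)*((ij.2:ℂ)+2)*((ij.2:ℂ)+3)*((ij.2:ℂ)+4)
                * (PowerSeries.coeff ij.1 f * PowerSeries.coeff (ij.2+4) f)) h1d,
             ← Finset.add_sum_erase ((antidiagonal (j+6)).erase (1, j+5))
              (fun ij => ((ij.2:ℂ)+1)*((ij.2:ℂ)+2)*((ij.2:ℂ)+3)*((ij.2:ℂ)+4)
                * (PowerSeries.coeff ij.1 f * PowerSeries.coeff (ij.2+4) f)) h0d'] at hg
          simp only [hcf0, hcf1, zero_mul, mul_zero, one_mul, mul_one, zero_add, add_zero] at hg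
          have hcf9 : PowerSeries.coeff (j+6+3) f = PowerSeries.coeff (j+8) E := hcfs (j+8)
          rw [hcf9] at hg
          have hq : ∀ t, t ≤ j+8 → MvPolynomial.aeval ![a 4, a 6] (qc PE t) = PowerSeries.coeff t f := by
            intro t ht
            match t with
            | 0 => simp [qc, hcf0]
            | (s+1) =>
              show MvPolynomial.aeval ![a 4, a 6] (qc PE (s+1)) = _
              have : qc PE (s+1) = PE s := by simp [qc]
              rw [this, ← ih s (by omega), ← hcfs s]
          show PowerSeries.coeff (j+8) E = _
          rw [PE_eq (j+7+1)]
          unfold peBody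
          rw [if_neg (by omega : ¬ (j+7+1 = 0)), if_neg (by omega : ¬ (j+7+1 = 4)),
            if_neg (by omega : ¬ (j+7+1 = 6)),
            if_pos (⟨by omega, hev⟩ : 8 ≤ j+7+1 ∧ Even (j+7+1))]
          simp only [show j+7+1-2 = j+6 from rfl, show j+7+1-3 = j+5 from rfl]
          simp only [map_mul, map_add, map_sub, map_sum, map_ofNat, MvPolynomial.aeval_C,
            map_natCast, map_one, map_neg, map_inv₀]
          have hs1 : ∑ x ∈ antidiagonal (j+6),
              ((x.1:ℂ) + 1) * ((x.1:ℂ) + 2) * ((x.2:ℂ) + 1) * ((x.2:ℂ) + 2) *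
                (MvPolynomial.aeval ![a 4, a 6] (qc PE (x.1 + 2)) *
                  MvPolynomial.aeval ![a 4, a 6] (qc PE (x.2 + 2)))
              = ∑ x ∈ antidiagonal (j+6),
              ((x.1:ℂ) + 1) * ((x.1:ℂ) + 2) * ((x.2:ℂ) + 1) * ((x.2:ℂ) + 2) *
                (PowerSeries.coeff (x.1+2) f * PowerSeries.coeff (x.2+2) f) := by
            apply sum_congr rfl
            intro x hx
            rw [HasAntidiagonal.mem_antidiagonal] at hx
            rw [hq (x.1+2) (by omega), hq (x.2+2) (by omega)]
          have hs2 : ∑ x ∈ (antidiagonal (j+6)).erase (0, j+6),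
              ((x.1:ℂ) + 1) * ((x.2:ℂ) + 1) * ((x.2:ℂ) + 2) * ((x.2:ℂ) + 3) *
                (MvPolynomial.aeval ![a 4, a 6] (qc PE (x.1 + 1)) *
                  MvPolynomial.aeval ![a 4, a 6] (qc PE (x.2 + 3)))
              = ∑ x ∈ (antidiagonal (j+6)).erase (0, j+6),
              ((x.1:ℂ) + 1) * ((x.2:ℂ) + 1) * ((x.2:ℂ) + 2) * ((x.2:ℂ) + 3) *
                (PowerSeries.coeff (x.1+1) f * PowerSeries.coeff (x.2+3) f) := by
            apply sum_congr rfl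
            intro x hx
            obtain ⟨hne, hx⟩ := mem_erase.mp hx
            rw [HasAntidiagonal.mem_antidiagonal] at hx
            have hb : x.2 ≤ j+5 := by
              by_contra hcon
              have h1 : x.2 = j+6 := by omega
              have h2 : x.1 = 0 := by omega
              exact hne (Prod.ext h2 h1)
            rw [hq (x.1+1) (by omega), hq (x.2+3) (by omega)]
          have hs3 : ∑ x ∈ ((antidiagonal (j+6)).erase (1, j+5)).erase (0, j+6),
              ((x.2:ℂ) + 1) * ((x.2:ℂ) + 2) * ((x.2:ℂ) + 3) * ((x.2:ℂ) + 4) *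
                (MvPolynomial.aeval ![a 4, a 6] (qc PE x.1) *
                  MvPolynomial.aeval ![a 4, a 6] (qc PE (x.2 + 4)))
              = ∑ x ∈ ((antidiagonal (j+6)).erase (1, j+5)).erase (0, j+6),
              ((x.2:ℂ) + 1) * ((x.2:ℂ) + 2) * ((x.2:ℂ) + 3) * ((x.2:ℂ) + 4) *
                (PowerSeries.coeff x.1 f * PowerSeries.coeff (x.2+4) f) := by
            apply sum_congr rfl
            intro x hx
            obtain ⟨hne0, hx⟩ := mem_erase.mp hx
            obtain ⟨hne1, hx⟩ := mem_erase.mp hx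
            rw [HasAntidiagonal.mem_antidiagonal] at hx
            have hb : x.2 ≤ j+4 := by
              by_contra hcon
              rcases Nat.lt_or_ge x.2 (j+6) with h' | h'
              · apply hne1
                have h1 : x.2 = j+5 := by omega
                have h2 : x.1 = 1 := by omega
                exact Prod.ext h2 h1
              · apply hne0
                have h1 : x.2 = j+6 := by omega
                have h2 : x.1 = 0 := by omega
                exact Prod.ext h2 h1
            rw [hq x.1 (by omega), hq (x.2+4) (by omega)]
          have hs4 : ∑ x ∈ antidiagonal (j+6),
              (MvPolynomial.aeval ![a 4, a 6] (qc PE x.1) *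
                MvPolynomial.aeval ![a 4, a 6] (qc PE x.2))
              = ∑ x ∈ antidiagonal (j+6),
              (PowerSeries.coeff x.1 f * PowerSeries.coeff x.2 f) := by
            apply sum_congr rfl
            intro x hx
            rw [HasAntidiagonal.mem_antidiagonal] at hx
            rw [hq x.1 (by omega), hq x.2 (by omega)]
          rw [hs1, hs2, hs3, hs4, hq 5 (by omega)]
          push_cast
          have c1 : ((j:ℂ)+2) ≠ 0 := by
            have := Nat.cast_ne_zero (R := ℂ).mpr (show j+2 ≠ 0 by omega)
            push_cast at this; exact this
          have c2 : ((j:ℂ)+7) ≠ 0 := by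
            have := Nat.cast_ne_zero (R := ℂ).mpr (show j+7 ≠ 0 by omega)
            push_cast at this; exact this
          have c3 : ((j:ℂ)+8) ≠ 0 := by
            have := Nat.cast_ne_zero (R := ℂ).mpr (show j+8 ≠ 0 by omega)
            push_cast at this; exact this
          have c4 : ((j:ℂ)+9) ≠ 0 := by
            have := Nat.cast_ne_zero (R := ℂ).mpr (show j+9 ≠ 0 by omega)
            push_cast at this; exact this
          have hKe : ((j:ℂ)+7+1-2-4)*((j:ℂ)+7+1-2+1)*((j:ℂ)+7+1-2+2)*((j:ℂ)+7+1-2+3)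
              = ((j:ℂ)+2)*(((j:ℂ)+7)*(((j:ℂ)+8)*((j:ℂ)+9))) := by ring
          rw [hKe, neg_mul, eq_neg_iff_add_eq_zero, inv_mul_eq_div, add_div',
            div_eq_zero_iff]
          · left
            push_cast at hg
            linear_combination hg
          · exact mul_ne_zero c1 (mul_ne_zero c2 (mul_ne_zero c3 c4))

theorem keyA (hE1 : PowerSeries.constantCoeff E = 1)
    (hE' : PowerSeries.derivativeFun E =
      PowerSeries.derivativeFun
        (PowerSeries.mk fun n => if 4 ≤ n ∧ Even n then a n else 0) * E)
    (hf : f = PowerSeries.X * E)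
    (hG : 3 * (Dn 2 f) ^ 2 - 4 * Dn 1 f * Dn 3 f + f * Dn 4 f
          + PowerSeries.C (120 * PowerSeries.coeff 5 f) * f ^ 2 = 0) :
    ∀ n, 4 ≤ n → Even n → a n = MvPolynomial.aeval ![a 4, a 6] (PA n) := by
  have hkey := key a f E hE1 hE' hf hG
  have he0 : PowerSeries.coeff 0 E = 1 := by
    rw [PowerSeries.coeff_zero_eq_constantCoeff]; exact hE1
  intro n
  induction n using Nat.strong_induction_on with
  | _ n ih =>
    intro h4 hev
    obtain ⟨m, rfl⟩ : ∃ m, n = m + 1 := ⟨n - 1, by omega⟩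
    have hrec := R1 a E hE' m
    have hm0 : ((m:ℕ), (0:ℕ)) ∈ antidiagonal m := by simp
    rw [← Finset.add_sum_erase (antidiagonal m)
        (fun ij => ((ij.1:ℂ)+1) * (if 4 ≤ ij.1+1 ∧ Even (ij.1+1) then a (ij.1+1) else 0)
          * PowerSeries.coeff ij.2 E) hm0] at hrec
    simp only [if_pos (show 4 ≤ m+1 ∧ Even (m+1) from ⟨h4, hev⟩), he0, mul_one] at hrec
    rw [PA_eq (m+1)]
    unfold paBody
    rw [if_pos (show 4 ≤ m+1 ∧ Even (m+1) from ⟨h4, hev⟩)]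
    simp only [show m+1-1 = m from rfl]
    rw [map_sub, map_mul, map_sum, MvPolynomial.aeval_C]
    have hsum : ∑ ij ∈ (antidiagonal m).erase (m, 0),
        MvPolynomial.aeval ![a 4, a 6] (MvPolynomial.C ((ij.1:ℚ)+1) *
          (if 4 ≤ ij.1+1 ∧ Even (ij.1+1) then PA (ij.1+1) else 0) * PE ij.2)
        = ∑ ij ∈ (antidiagonal m).erase (m, 0),
          ((ij.1:ℂ)+1) * (if 4 ≤ ij.1+1 ∧ Even (ij.1+1) then a (ij.1+1) else 0)
            * PowerSeries.coeff ij.2 E := by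
      apply sum_congr rfl
      intro ij hij
      obtain ⟨hne, hij⟩ := mem_erase.mp hij
      rw [HasAntidiagonal.mem_antidiagonal] at hij
      have hb : ij.1 < m := by
        rcases Nat.lt_or_ge ij.1 m with h' | h'
        · exact h'
        · exfalso; apply hne
          have h1 : ij.1 = m := by omega
          have h2 : ij.2 = 0 := by omega
          exact Prod.ext h1 h2
      rw [map_mul, map_mul, MvPolynomial.aeval_C, ← hkey ij.2,
        apply_ite (MvPolynomial.aeval ![a 4, a 6]), map_zero]
      by_cases hc : 4 ≤ ij.1+1 ∧ Even (ij.1+1)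
      · rw [if_pos hc, if_pos hc, ← ih (ij.1+1) (by omega) hc.1 hc.2]
        push_cast; ring
      · rw [if_neg hc, if_neg hc]
        push_cast; ring
    rw [hsum, ← hkey (m+1), map_inv₀, map_natCast]
    have hmne : ((m+1:ℕ):ℂ) ≠ 0 := Nat.cast_ne_zero.mpr (by omega)
    rw [eq_sub_iff_add_eq, inv_mul_eq_div, add_div' _ _ _ hmne, div_eq_iff hmne]
    push_cast at hrec ⊢
    linear_combination -hrec

end Key

theorem stmt4 :
    ∃ P : ℕ → MvPolynomial (Fin 2) ℚ,
      ∀ (a : ℕ → ℂ) (f E : PowerSeries ℂ),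
        PowerSeries.constantCoeff E = 1 →
        PowerSeries.derivativeFun E =
          PowerSeries.derivativeFun
            (PowerSeries.mk fun n => if 4 ≤ n ∧ Even n then a n else 0) * E →
        f = PowerSeries.X * E →
        (3 * (Dn 2 f) ^ 2 - 4 * Dn 1 f * Dn 3 f + f * Dn 4 f
          + PowerSeries.C (120 * PowerSeries.coeff 5 f) * f ^ 2 = 0) →
        (∀ k : ℕ, 4 ≤ k → a (2 * k) = MvPolynomial.aeval ![a 4, a 6] (P k)) ∧
        a 8 = -(6 / 7) * a 4 ^ 2 ∧
        a 10 = -(12 / 11) * a 4 * a 6 ∧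
        a 12 = (3 / 143) * (32 * a 4 ^ 3 - 25 * a 6 ^ 2) := by
  refine ⟨fun k => PA (2*k), ?_⟩
  intro a f E hE1 hE' hf hG
  have hkey := key a f E hE1 hE' hf hG
  have hkA := keyA a f E hE1 hE' hf hG
  have hcfs : ∀ t, PowerSeries.coeff (t+1) f = PowerSeries.coeff t E := by
    intro t; rw [hf]; exact coeff_succ_X_mul t E
  have he0 : PowerSeries.coeff 0 E = 1 := by
    rw [PowerSeries.coeff_zero_eq_constantCoeff]; exact hE1
  have he1 : PowerSeries.coeff 1 E = 0 := by rw [hkey 1, PE_odd 1 (by decide), map_zero]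
  have he2 : PowerSeries.coeff 2 E = 0 := by rw [hkey 2, PE_two, map_zero]
  have he3 : PowerSeries.coeff 3 E = 0 := by rw [hkey 3, PE_odd 3 (by decide), map_zero]
  have he4 : PowerSeries.coeff 4 E = a 4 := by
    rw [hkey 4, PE_four, MvPolynomial.aeval_X]; simp
  have he5 : PowerSeries.coeff 5 E = 0 := by rw [hkey 5, PE_odd 5 (by decide), map_zero]
  have he6 : PowerSeries.coeff 6 E = a 6 := by
    rw [hkey 6, PE_six, MvPolynomial.aeval_X]; simp
  have he7 : PowerSeries.coeff 7 E = 0 := by rw [hkey 7, PE_odd 7 (by decide), map_zero]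
  have he9 : PowerSeries.coeff 9 E = 0 := by rw [hkey 9, PE_odd 9 (by decide), map_zero]
  have he11 : PowerSeries.coeff 11 E = 0 := by rw [hkey 11, PE_odd 11 (by decide), map_zero]
  have hc0 : PowerSeries.coeff 0 f = 0 := by rw [hf]; simp
  have hc1 : PowerSeries.coeff 1 f = 1 := by have := hcfs 0; rw [he0] at this; exact this
  have hc2 : PowerSeries.coeff 2 f = 0 := by have := hcfs 1; rw [he1] at this; exact this
  have hc3 : PowerSeries.coeff 3 f = 0 := by have := hcfs 2; rw [he2] at this; exact this
  have hc4 : PowerSeries.coeff 4 f = 0 := by have := hcfs 3; rw [he3] at this; exact this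
  have hc5 : PowerSeries.coeff 5 f = a 4 := by have := hcfs 4; rw [he4] at this; exact this
  have hc6 : PowerSeries.coeff 6 f = 0 := by have := hcfs 5; rw [he5] at this; exact this
  have hc7 : PowerSeries.coeff 7 f = a 6 := by have := hcfs 6; rw [he6] at this; exact this
  have hc8 : PowerSeries.coeff 8 f = 0 := by have := hcfs 7; rw [he7] at this; exact this
  have hc9 : PowerSeries.coeff 9 f = PowerSeries.coeff 8 E := hcfs 8
  have hc10 : PowerSeries.coeff 10 f = 0 := by have := hcfs 9; rw [he9] at this; exact this
  have hc11 : PowerSeries.coeff 11 f = PowerSeries.coeff 10 E := hcfs 10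
  have hc12 : PowerSeries.coeff 12 f = 0 := by have := hcfs 11; rw [he11] at this; exact this
  have hc13 : PowerSeries.coeff 13 f = PowerSeries.coeff 12 E := hcfs 12
  -- E-recursion at 7, 9, 11
  have h8 := R1 a E hE' 7
  have h10 := R1 a E hE' 9
  have h12 := R1 a E hE' 11
  rw [Finset.Nat.sum_antidiagonal_eq_sum_range_succ_mk] at h8 h10 h12
  simp only [Finset.sum_range_succ, Finset.sum_range_zero] at h8 h10 h12
  norm_num [Nat.even_iff, he0, he1, he2, he3, he4, he5, he6, he7, he9] at h8 h10 h12
  -- G-coefficients at 6, 8, 10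
  have g6 := coeffG f hG 6
  have g8 := coeffG f hG 8
  have g10 := coeffG f hG 10
  rw [Finset.Nat.sum_antidiagonal_eq_sum_range_succ_mk,
      Finset.Nat.sum_antidiagonal_eq_sum_range_succ_mk,
      Finset.Nat.sum_antidiagonal_eq_sum_range_succ_mk,
      Finset.Nat.sum_antidiagonal_eq_sum_range_succ_mk] at g6 g8 g10
  simp only [Finset.sum_range_succ, Finset.sum_range_zero] at g6 g8 g10
  norm_num [hc0, hc1, hc2, hc3, hc4, hc5, hc6, hc7, hc8, hc9, hc10, hc11, hc12, hc13]
    at g6 g8 g10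
  refine ⟨?_, ?_, ?_, ?_⟩
  · intro k hk
    exact hkA (2*k) (by omega) ⟨k, by omega⟩
  · linear_combination (-1/8 : ℂ) * h8 + (1/1008 : ℂ) * g6
  · linear_combination (-1/10 : ℂ) * h10 + (1/3960 : ℂ) * g8
  · linear_combination (-1/12 : ℂ) * h12 + (1/10296 : ℂ) * g10
      + ((1/12 : ℂ) * a 4) * h8 + ((-5/5148 : ℂ) * a 4) * g6
end

section
/- For f(x) = 1 - e^{-x}, the function F(x,h) = f(x+h)/(f(x)f(h)) = (1 - e^{-(x+h)})/((1-e^{-x})(1-e^{-h})) satisfies the blow-up relation F(x,a+b)F(y-x,b) + F(y,a+b)F(x-y,a) = F(x,a)F(y,b). -/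
/-!
Writing `φ(z) = 1/(1 - e^{-z}) - 1/2 = coth(z/2)/2`, one has `F(x,h) = φ(x) + φ(h)`, `φ` is odd, and
`φ` satisfies the addition law `φ(s+t)(φ(s) + φ(t)) = φ(s)φ(t) + 1/4` of `coth`. Expanding both sides of the
blow-up relation in `φ`, it reduces to the sum of the addition law at `(a, b)` and at `(y, -x)`.
-/

noncomputable def fTodd (x : ℂ) : ℂ := 1 - Complex.exp (-x)

noncomputable def FTodd (x h : ℂ) : ℂ := fTodd (x + h) / (fTodd x * fTodd h)

theorem blowup_relation_of_addition_law {G R : Type*} [AddCommGroup G] [CommRing R]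
    (φ : G → R) (c : R) {x y a b : G} (hodd : φ (x - y) = -φ (y - x))
    (hadd_ab : φ (a + b) * (φ a + φ b) = φ a * φ b + c)
    (hadd_yx : φ (y - x) * (φ y - φ x) = c - φ y * φ x) :
    (φ x + φ (a + b)) * (φ (y - x) + φ b) + (φ y + φ (a + b)) * (φ (x - y) + φ a)
      = (φ x + φ a) * (φ y + φ b) := by
  rw [hodd]
  linear_combination hadd_ab - hadd_yx

noncomputable def toddCoth (z : ℂ) : ℂ := (fTodd z)⁻¹ - 2⁻¹

theorem fTodd_zero : fTodd 0 = 0 := by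
  simp [fTodd]

theorem fTodd_add (s t : ℂ) : fTodd (s + t) = fTodd s + fTodd t - fTodd s * fTodd t := by
  simp only [fTodd, neg_add, Complex.exp_add]
  ring

theorem fTodd_neg_mul_one_sub (z : ℂ) : fTodd (-z) * (1 - fTodd z) = -fTodd z := by
  have h := fTodd_add z (-z)
  rw [add_neg_cancel, fTodd_zero] at h
  linear_combination -h

theorem fTodd_neg_ne_zero {z : ℂ} (hz : fTodd z ≠ 0) : fTodd (-z) ≠ 0 := by
  intro h
  have := fTodd_neg_mul_one_sub z
  rw [h, zero_mul, eq_comm, neg_eq_zero] at this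
  exact hz this

theorem FTodd_eq_toddCoth_add {x h : ℂ} (hx : fTodd x ≠ 0) (hh : fTodd h ≠ 0) :
    FTodd x h = toddCoth x + toddCoth h := by
  rw [FTodd, fTodd_add, toddCoth, toddCoth]
  field_simp
  ring

theorem toddCoth_neg {z : ℂ} (hz : fTodd z ≠ 0) : toddCoth (-z) = -toddCoth z := by
  have hz' := fTodd_neg_ne_zero hz
  rw [toddCoth, toddCoth]
  field_simp
  linear_combination 2 * fTodd_neg_mul_one_sub z

theorem toddCoth_add_mul {s t : ℂ} (hs : fTodd s ≠ 0) (ht : fTodd t ≠ 0) (hst : fTodd (s + t) ≠ 0) :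
    toddCoth (s + t) * (toddCoth s + toddCoth t) = toddCoth s * toddCoth t + 4⁻¹ := by
  rw [toddCoth, toddCoth, toddCoth, fTodd_add] at *
  field_simp
  ring

theorem toddCoth_sub_mul {s t : ℂ} (hs : fTodd s ≠ 0) (ht : fTodd t ≠ 0) (hst : fTodd (s - t) ≠ 0) :
    toddCoth (s - t) * (toddCoth s - toddCoth t) = 4⁻¹ - toddCoth s * toddCoth t := by
  rw [sub_eq_add_neg] at hst ⊢
  rw [← neg_neg (toddCoth t), ← toddCoth_neg ht, ← sub_eq_add_neg]
  linear_combination toddCoth_add_mul hs (fTodd_neg_ne_zero ht) hst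

theorem stmt9 (x y a b : ℂ)
    (hx : fTodd x ≠ 0) (hy : fTodd y ≠ 0) (ha : fTodd a ≠ 0) (hb : fTodd b ≠ 0)
    (hab : fTodd (a + b) ≠ 0) (hxy : fTodd (x - y) ≠ 0) (hyx : fTodd (y - x) ≠ 0) :
    FTodd x (a + b) * FTodd (y - x) b + FTodd y (a + b) * FTodd (x - y) a
      = FTodd x a * FTodd y b := by
  rw [FTodd_eq_toddCoth_add hx hab, FTodd_eq_toddCoth_add hyx hb, FTodd_eq_toddCoth_add hy hab,
    FTodd_eq_toddCoth_add hxy ha, FTodd_eq_toddCoth_add hx ha, FTodd_eq_toddCoth_add hy hb]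
  refine blowup_relation_of_addition_law toddCoth 4⁻¹ ?_ (toddCoth_add_mul ha hb hab)
    (toddCoth_sub_mul hy hx hyx)
  rw [← neg_sub, toddCoth_neg hyx]
end

section
/- Substituting f(x) = x·e^{-2v(x)} with v(0)=v'(0)=v''(0)=0 into the equation 3f''(x)² - 4f'(x)f⁽³⁾(x) + f(x)f⁽⁴⁾(x) + f(x)²f⁽⁵⁾(0) = 0 transforms it (after division by a unit) into 12(x²v''(x)² + v''(x)) - x²(v⁽⁴⁾(x) + 5v⁽⁴⁾(0)) = 0. -/
open PowerSeries

lemma DX : PowerSeries.derivativeFun (X : ℂ⟦X⟧) = 1 := PowerSeries.derivative_X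

lemma Dmul (a b : ℂ⟦X⟧) : derivativeFun (a * b) = derivativeFun a * b + a * derivativeFun b := by
  rw [derivativeFun_mul, smul_eq_mul, smul_eq_mul]; ring

lemma Dadd (a b : ℂ⟦X⟧) : derivativeFun (a + b) = derivativeFun a + derivativeFun b :=
  derivativeFun_add a b

lemma DC (c : ℂ) : derivativeFun (C (R := ℂ) c) = 0 := derivative_C (r := c)

lemma cDF (f : ℂ⟦X⟧) (n : ℕ) :
    coeff n (derivativeFun f) = coeff (n + 1) f * (n + 1) := coeff_derivative f n

lemma Done : derivativeFun (1 : ℂ⟦X⟧) = 0 := derivativeFun_one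

lemma Dneg (a : ℂ⟦X⟧) : derivativeFun (-a) = - derivativeFun a := by
  have := derivativeFun_smul (-1 : ℂ) a
  simpa using this

lemma Dsub (a b : ℂ⟦X⟧) : derivativeFun (a - b) = derivativeFun a - derivativeFun b := by
  rw [sub_eq_add_neg, Dadd, Dneg, sub_eq_add_neg]

lemma DofNat (n : ℕ) [n.AtLeastTwo] :
    derivativeFun (OfNat.ofNat n : ℂ⟦X⟧) = 0 := by
  rw [← map_ofNat (C (R := ℂ)) n, DC]

lemma CofNat (n : ℕ) [n.AtLeastTwo] : (C (R := ℂ)) (OfNat.ofNat n) = (OfNat.ofNat n : ℂ⟦X⟧) :=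
  map_ofNat _ n

lemma D2 : derivativeFun (2 : ℂ⟦X⟧) = 0 := DofNat 2
lemma D4 : derivativeFun (4 : ℂ⟦X⟧) = 0 := DofNat 4
lemma D6 : derivativeFun (6 : ℂ⟦X⟧) = 0 := DofNat 6
lemma D8 : derivativeFun (8 : ℂ⟦X⟧) = 0 := DofNat 8
lemma D12 : derivativeFun (12 : ℂ⟦X⟧) = 0 := DofNat 12
lemma D16 : derivativeFun (16 : ℂ⟦X⟧) = 0 := DofNat 16
lemma D32 : derivativeFun (32 : ℂ⟦X⟧) = 0 := DofNat 32
lemma D48 : derivativeFun (48 : ℂ⟦X⟧) = 0 := DofNat 48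

/-- derivative of `E * P` when `E' = -2 v' E`. -/
lemma DEP (v E : ℂ⟦X⟧)
    (hE : derivativeFun E = C (R := ℂ) (-2) * derivativeFun v * E) (P : ℂ⟦X⟧) :
    derivativeFun (E * P) = E * (derivativeFun P - 2 * derivativeFun v * P) := by
  rw [Dmul, hE]
  have : (C (R := ℂ)) (-2) = (-2 : ℂ⟦X⟧) := by rw [map_neg, CofNat]
  rw [this]; ring

theorem stmt12 (v f E : PowerSeries ℂ)
    (hv0 : PowerSeries.constantCoeff (R := ℂ) v = 0)
    (hv1 : PowerSeries.coeff (R := ℂ) 1 v = 0)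
    (hv2 : PowerSeries.coeff (R := ℂ) 2 v = 0)
    (hE0 : PowerSeries.constantCoeff (R := ℂ) E = 1)
    (hE : PowerSeries.derivativeFun E
      = PowerSeries.C (R := ℂ) (-2) * PowerSeries.derivativeFun v * E)
    (hf : f = PowerSeries.X * E) :
    (3 * (Dn 2 f) ^ 2 - 4 * Dn 1 f * Dn 3 f + f * Dn 4 f
        + PowerSeries.C (R := ℂ) (120 * PowerSeries.coeff (R := ℂ) 5 f) * f ^ 2 = 0)
      ↔ (12 * (PowerSeries.X ^ 2 * (Dn 2 v) ^ 2 + Dn 2 v)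
          - PowerSeries.X ^ 2 * (Dn 4 v
            + PowerSeries.C (R := ℂ) (5 * (24 * PowerSeries.coeff (R := ℂ) 4 v))) = 0) := by
  set w1 : ℂ⟦X⟧ := derivativeFun v with hw1
  set w2 : ℂ⟦X⟧ := derivativeFun w1 with hw2
  set w3 : ℂ⟦X⟧ := derivativeFun w2 with hw3
  set w4 : ℂ⟦X⟧ := derivativeFun w3 with hw4
  have gv2 : Dn 2 v = w2 := rfl
  have gv4 : Dn 4 v = w4 := rfl
  -- coefficient facts
  have cw1 : constantCoeff (R := ℂ) w1 = 0 := by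
    rw [hw1, ← coeff_zero_eq_constantCoeff_apply, cDF]
    simp [hv1]
  have e1 : coeff (R := ℂ) 1 E = 0 := by
    have h := congrArg (coeff (R := ℂ) 0) hE
    rw [cDF, coeff_zero_eq_constantCoeff_apply, map_mul, map_mul,
      constantCoeff_C, cw1] at h
    simpa using h
  have e4 : coeff (R := ℂ) 4 E = -2 * coeff (R := ℂ) 4 v := by
    have h := congrArg (coeff (R := ℂ) 3) hE
    rw [cDF, mul_assoc, coeff_C_mul, coeff_mul,
      Finset.Nat.sum_antidiagonal_eq_sum_range_succ_mk] at h
    simp only [Finset.sum_range_succ, Finset.sum_range_zero, hw1, cDF,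
      hv1, hv2, e1, coeff_zero_eq_constantCoeff_apply, hE0] at h
    norm_num [coeff_zero_eq_constantCoeff_apply, hE0] at h
    linear_combination h / 4
  have c5 : coeff (R := ℂ) 5 f = coeff (R := ℂ) 4 E := by
    rw [hf]; simpa using coeff_succ_X_mul 4 E
  have hc5 : C (R := ℂ) (120 * coeff (R := ℂ) 5 f) = -240 * C (R := ℂ) (coeff (R := ℂ) 4 v) := by
    rw [c5, e4, show (120 : ℂ) * (-2 * coeff (R := ℂ) 4 v) = -240 * coeff (R := ℂ) 4 v by ring,
      map_mul, map_neg, CofNat]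
  have hc4 : C (R := ℂ) (5 * (24 * coeff (R := ℂ) 4 v)) = 120 * C (R := ℂ) (coeff (R := ℂ) 4 v) := by
    rw [show (5 : ℂ) * (24 * coeff (R := ℂ) 4 v) = 120 * coeff (R := ℂ) 4 v by ring, map_mul, CofNat]
  -- derivatives of f
  have h1 : Dn 1 f = E * (1 - 2 * X * w1) := by
    show derivativeFun f = _
    rw [hf, Dmul, DX, hE]
    have : (C (R := ℂ)) (-2) = (-2 : ℂ⟦X⟧) := by rw [map_neg, CofNat]
    rw [this]; ring
  have h2 : Dn 2 f = E * (-4 * w1 + 4 * X * (w1 * w1) - 2 * X * w2) := by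
    show derivativeFun (Dn 1 f) = _
    rw [h1, DEP v E hE]
    simp only [Dsub, Dadd, Dmul, DX, Done, D2, D4, ← hw1, ← hw2]
    ring
  have h3 : Dn 3 f = E * (-6 * w2 - 2 * X * w3 + 12 * (w1 * w1)
      + 12 * X * (w1 * w2) - 8 * X * (w1 * w1 * w1)) := by
    show derivativeFun (Dn 2 f) = _
    rw [h2, DEP v E hE]
    simp only [Dsub, Dadd, Dmul, DX, Done, D2, D4, D6, D8, D12, Dneg, ← hw1, ← hw2, ← hw3]
    ring
  have h4 : Dn 4 f = E * (48 * (w1 * w2) - 8 * w3 - 32 * (w1 * w1 * w1)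
      + 12 * X * (w2 * w2) + 16 * X * (w1 * w3) - 2 * X * w4
      - 48 * X * (w1 * w1 * w2) + 16 * X * (w1 * w1 * w1 * w1)) := by
    show derivativeFun (Dn 3 f) = _
    rw [h3, DEP v E hE]
    simp only [Dsub, Dadd, Dmul, DX, Done, D2, D4, D6, D8, D12, D16, D32, D48, Dneg, ← hw1, ← hw2, ← hw3, ← hw4]
    ring
  -- main factorization
  have key : 3 * (Dn 2 f) ^ 2 - 4 * Dn 1 f * Dn 3 f + f * Dn 4 f
        + C (R := ℂ) (120 * coeff (R := ℂ) 5 f) * f ^ 2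
      = (2 * E ^ 2) * (12 * (X ^ 2 * (Dn 2 v) ^ 2 + Dn 2 v)
          - X ^ 2 * (Dn 4 v + C (R := ℂ) (5 * (24 * coeff (R := ℂ) 4 v)))) := by
    rw [hc5, hc4, gv2, gv4, h1, h2, h3, h4, hf]
    ring
  have hne : (2 * E ^ 2 : ℂ⟦X⟧) ≠ 0 := by
    intro h
    have h0 : constantCoeff (R := ℂ) (2 * E ^ 2 : ℂ⟦X⟧) = 2 := by
      rw [map_mul, map_pow, hE0, one_pow, mul_one, map_ofNat]
    rw [h, map_zero] at h0
    exact two_ne_zero h0.symm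
  rw [key, mul_eq_zero]
  exact or_iff_right hne
end
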